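/- arXiv:2405.19881 — 6 statements merged into one kernel-verified Lean document; each statement's English description precedes it below -/
import Mathlib

section
/- Let d ≥ 1 and consider a perturbed lattice with ℤ^d-invariant perturbations (p_x)_{x∈ℤ^d} and independent uniform shift U. If E[|p_0|^d] < ∞, then for every r > 0 the second moment of the number of perturbed lattice points in B_r is finite: E[N_r²] < ∞. In particular the number variance of the perturbed lattice in every finite ball is finite. -/
/-!
Two perturbed points `T x + p_x + U`, `T y + p_y + U` that both lie in `B_r` satisfy
`‖T (y - x)‖ ≤ 2r + 2 max (‖p_x‖, ‖p_y‖)`, since `U` cancels in their difference. Charging each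
pair to the point with the larger perturbation gives, pointwise,
`N_r² ≤ 2 ∑_x 1{T x + p_x + U ∈ B_r} · n(2r + 2‖p_x‖)`, where `n(ρ) = O((1 + ρ)^d)` is the number
of lattice points in `B_ρ`. The `x`-th summand depends only on `(U, p_x)`, whose law is
`Unif(F) ⊗ law(p_0)` with `F = T([0,1)^d)`, by independence and stationarity. For fixed
`p_x = a` the translates `F + T x` are disjoint, so `∑_x P(T x + a + U ∈ B_r) ≤ vol(B_r)`.
Hence `E[N_r²] ≤ 2 vol(B_r) E[n(2r + 2‖p_0‖)]`, which is finite by the `d`-th moment assumption.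
-/

open MeasureTheory ProbabilityTheory Set Metric Function
open scoped ENNReal NNReal

theorem ENNReal.sq_tsum_le_two_mul_tsum_mul_tsum {ι : Type*} (f : ι → ℝ≥0∞)
    (g : ι → ι → ℝ≥0∞) (h : ∀ x y, f x * f y ≤ f x * g x y + f y * g y x) :
    (∑' x, f x) ^ 2 ≤ 2 * ∑' x, f x * ∑' y, g x y := by
  calc (∑' x, f x) ^ 2 = ∑' x, ∑' y, f x * f y := by
        simp_rw [sq, ← ENNReal.tsum_mul_right, ← ENNReal.tsum_mul_left]
    _ ≤ ∑' x, ∑' y, (f x * g x y + f y * g y x) :=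
        ENNReal.tsum_le_tsum fun x => ENNReal.tsum_le_tsum fun y => h x y
    _ = 2 * ∑' x, f x * ∑' y, g x y := by
        simp_rw [ENNReal.tsum_add, ENNReal.tsum_mul_left]
        rw [ENNReal.tsum_comm (f := fun x y => f y * g y x)]
        simp_rw [ENNReal.tsum_mul_left, two_mul]

theorem sq_tsum_indicator_closedBall_le {ι E : Type*} [SeminormedAddCommGroup E]
    (Y D : ι → E) (u : E) (r : ℝ) :
    (∑' x, (closedBall (0 : E) r).indicator (fun _ => (1 : ℝ≥0∞)) (Y x + D x + u)) ^ 2 ≤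
      2 * ∑' x, (closedBall (0 : E) r).indicator (fun _ => 1) (Y x + D x + u) *
        ∑' y, (closedBall (0 : E) (2 * r + 2 * ‖D x‖)).indicator (fun _ => 1) (Y y - Y x) := by
  refine ENNReal.sq_tsum_le_two_mul_tsum_mul_tsum _ _ fun x y => ?_
  by_cases hx : Y x + D x + u ∈ closedBall 0 r
  · by_cases hy : Y y + D y + u ∈ closedBall 0 r
    · have hx' := mem_closedBall_zero_iff.mp hx
      have hy' := mem_closedBall_zero_iff.mp hy
      have hxy : ‖Y y - Y x‖ ≤ 2 * r + ‖D x‖ + ‖D y‖ := by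
        have : Y y - Y x = (Y y + D y + u) - (Y x + D x + u) - D y + D x := by abel
        rw [this]
        linarith [norm_add_le (Y y + D y + u - (Y x + D x + u) - D y) (D x),
          norm_sub_le (Y y + D y + u - (Y x + D x + u)) (D y),
          norm_sub_le (Y y + D y + u) (Y x + D x + u)]
      rcases le_total ‖D y‖ ‖D x‖ with hle | hle
      · have : Y y - Y x ∈ closedBall (0 : E) (2 * r + 2 * ‖D x‖) := by
          rw [mem_closedBall_zero_iff]; linarith
        simp [indicator_of_mem hx, indicator_of_mem hy, indicator_of_mem this]
      · have : Y x - Y y ∈ closedBall (0 : E) (2 * r + 2 * ‖D y‖) := by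
          rw [mem_closedBall_zero_iff, norm_sub_rev]; linarith
        simp [indicator_of_mem hx, indicator_of_mem hy, indicator_of_mem this]
    · simp [indicator_of_notMem hy]
  · simp [indicator_of_notMem hx]

theorem tsum_setLIntegral_comp_add_le {G ι : Type*} [AddGroup G] [MeasurableSpace G]
    [MeasurableAdd G] (μ : Measure G) [μ.IsAddRightInvariant] [Countable ι] {F : Set G}
    (hF : MeasurableSet F) (v : ι → G) (hdisj : Pairwise (Disjoint on fun i => (· + v i) '' F))
    (g : G → ℝ≥0∞) :
    ∑' i, ∫⁻ u in F, g (u + v i) ∂μ ≤ ∫⁻ u, g u ∂μ := by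
  simp_rw [(measurePreserving_add_right μ _).setLIntegral_comp_emb
    (measurableEmbedding_addRight _)]
  rw [← lintegral_iUnion
    (fun i => (measurableEmbedding_addRight (v i)).measurableSet_image' hF) hdisj]
  exact setLIntegral_le_lintegral _ _

theorem map_apply_eq_map_apply_zero {Ω ι β : Type*} [MeasurableSpace Ω] [MeasurableSpace β]
    [AddZeroClass ι] {μ : Measure Ω} {p : ι → Ω → β} (hp : ∀ x, Measurable (p x))
    (hinv : ∀ z, μ.map (fun ω x => p (x + z) ω) = μ.map (fun ω x => p x ω)) (z : ι) :
    μ.map (p z) = μ.map (p 0) := by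
  have hpz : Measurable fun ω x => p (x + z) ω := measurable_pi_lambda _ fun x => hp (x + z)
  calc μ.map (p z) = (μ.map fun ω x => p (x + z) ω).map (Function.eval 0) := by
        rw [Measure.map_map (measurable_pi_apply 0) hpz]; simp [Function.comp_def]
    _ = μ.map (p 0) := by
        rw [hinv, Measure.map_map (measurable_pi_apply 0) (measurable_pi_lambda _ hp)]; rfl

theorem map_prod_eq_prod_map_of_indepFun_of_map_shift_eq {Ω ι β γ : Type*} [MeasurableSpace Ω]
    [MeasurableSpace β] [MeasurableSpace γ] [AddZeroClass ι] {μ : Measure Ω} [IsFiniteMeasure μ]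
    {U : Ω → γ} {p : ι → Ω → β} (hU : Measurable U) (hp : ∀ x, Measurable (p x))
    (hinv : ∀ z, μ.map (fun ω x => p (x + z) ω) = μ.map (fun ω x => p x ω))
    (hindep : IndepFun U (fun ω x => p x ω) μ) (x : ι) :
    μ.map (fun ω => (U ω, p x ω)) = (μ.map U).prod (μ.map (p 0)) := by
  rw [(hindep.comp measurable_id (measurable_pi_apply x)).map_prod_eq_prod_map_map
    hU.aemeasurable (hp x).aemeasurable, map_apply_eq_map_apply_zero hp hinv x]

theorem lintegral_tsum_comp_eq_tsum_lintegral {Ω α ι : Type*} [MeasurableSpace Ω]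
    [MeasurableSpace α] [Countable ι] {μ : Measure Ω} {ν : Measure α} {X : ι → Ω → α}
    (hX : ∀ i, Measurable (X i)) (hlaw : ∀ i, μ.map (X i) = ν) {G : ι → α → ℝ≥0∞}
    (hG : ∀ i, Measurable (G i)) :
    ∫⁻ ω, ∑' i, G i (X i ω) ∂μ = ∑' i, ∫⁻ a, G i a ∂ν := by
  rw [lintegral_tsum (f := fun i ω => G i (X i ω)) fun i => ((hG i).comp (hX i)).aemeasurable]
  exact tsum_congr fun i => by rw [← hlaw i, lintegral_map (hG i) (hX i)]

theorem measurable_indicator_closedBall_add_mul {E : Type*} [SeminormedAddCommGroup E]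
    [MeasurableSpace E] [OpensMeasurableSpace E] [MeasurableAdd₂ E] (c : E) (r : ℝ)
    {Φ : E → ℝ≥0∞} (hΦ : Measurable Φ) :
    Measurable fun q : E × E =>
      (closedBall 0 r).indicator (fun _ => (1 : ℝ≥0∞)) (c + q.2 + q.1) * Φ q.2 :=
  ((measurable_const.indicator measurableSet_closedBall).comp
    ((measurable_snd.const_add c).add measurable_fst)).mul (hΦ.comp measurable_snd)

section Lattice

variable {d : ℕ}

def intPoint (x : Fin d → ℤ) : EuclideanSpace ℝ (Fin d) := WithLp.toLp 2 fun i => (x i : ℝ)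

def unitCube (d : ℕ) : Set (EuclideanSpace ℝ (Fin d)) :=
  WithLp.toLp 2 '' univ.pi fun _ => Ico (0 : ℝ) 1

@[simp] theorem intPoint_apply (x : Fin d → ℤ) (i : Fin d) : intPoint x i = x i := rfl

theorem intPoint_add (x y : Fin d → ℤ) : intPoint (x + y) = intPoint x + intPoint y := by
  ext i; simp

theorem measurableSet_unitCube : MeasurableSet (unitCube d) := by
  rw [unitCube, image_eq_preimage_of_inverse (WithLp.ofLp_toLp 2) (WithLp.toLp_ofLp 2)]
  exact (WithLp.measurable_ofLp 2 _) (MeasurableSet.univ_pi fun _ => measurableSet_Ico)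

theorem pairwise_disjoint_image_add_intPoint_unitCube :
    Pairwise (Disjoint on fun x : Fin d → ℤ => (· + intPoint x) '' unitCube d) := by
  intro x y hxy
  refine disjoint_left.mpr ?_
  rintro _ ⟨_, ⟨a, ha, rfl⟩, rfl⟩ ⟨_, ⟨b, hb, rfl⟩, hab⟩
  refine hxy (funext fun i => ?_)
  have hi : b i + y i = a i + x i := by simpa using congrArg (· i) hab
  have floor_eq {c : ℝ} (hc : c ∈ Ico (0 : ℝ) 1) (z : ℤ) : ⌊c + z⌋ = z := by
    rw [Int.floor_add_intCast, Int.floor_eq_zero_iff.mpr hc, zero_add]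
  rw [← floor_eq (ha i trivial) (x i), ← hi, floor_eq (hb i trivial)]

theorem tsum_indicator_norm_intPoint_le (t : ℝ≥0) :
    ∑' z, {z : Fin d → ℤ | ‖intPoint z‖ ≤ t}.indicator (fun _ => (1 : ℝ≥0∞)) z ≤
      ((2 * t + 1 : ℝ≥0) : ℝ≥0∞) ^ d := by
  set m : ℕ := ⌊t⌋₊
  set box : Finset (Fin d → ℤ) := Fintype.piFinset fun _ => Finset.Icc (-(m : ℤ)) m
  have hsub : {z : Fin d → ℤ | ‖intPoint z‖ ≤ t} ⊆ box := by
    intro z hz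
    simp only [box, Fintype.coe_piFinset, mem_pi, mem_univ, Finset.coe_Icc, mem_Icc, forall_const]
    intro i
    have hzi : |(z i : ℝ)| ≤ t := by
      simpa using (PiLp.norm_apply_le (intPoint z) i).trans hz
    have : (z i).natAbs ≤ m :=
      Nat.le_floor (by rw [← NNReal.coe_le_coe]; push_cast; simpa [Nat.cast_natAbs] using hzi)
    omega
  have hbox : ((box.card : ℝ≥0) : ℝ≥0∞) ≤ ((2 * t + 1 : ℝ≥0) : ℝ≥0∞) ^ d := by
    rw [Fintype.card_piFinset, Finset.prod_const, Finset.card_univ, Fintype.card_fin, Int.card_Icc]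
    push_cast
    gcongr
    rw [show ((m : ℤ) + 1 - -(m : ℤ)).toNat = 2 * m + 1 by omega]
    push_cast
    gcongr
    exact_mod_cast Nat.floor_le zero_le
  calc _ ≤ ∑' z, (box : Set (Fin d → ℤ)).indicator (fun _ => (1 : ℝ≥0∞)) z :=
        ENNReal.tsum_le_tsum fun z => indicator_le_indicator_of_subset hsub (fun _ => zero_le) z
    _ = box.card := by rw [← sum_eq_tsum_indicator]; simp
    _ ≤ _ := by exact_mod_cast hbox

variable (T : EuclideanSpace ℝ (Fin d) ≃ₗ[ℝ] EuclideanSpace ℝ (Fin d))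

theorem measurableSet_image_unitCube : MeasurableSet (T '' unitCube d) :=
  T.toContinuousLinearEquiv.toHomeomorph.toMeasurableEquiv.measurableSet_image.mpr
    measurableSet_unitCube

theorem tsum_setLIntegral_indicator_closedBall_le (a : EuclideanSpace ℝ (Fin d)) (r : ℝ) :
    ∑' x : Fin d → ℤ, ∫⁻ u in T '' unitCube d,
        (closedBall 0 r).indicator (fun _ => (1 : ℝ≥0∞)) (T (intPoint x) + a + u) ≤
      volume (closedBall (0 : EuclideanSpace ℝ (Fin d)) r) := by
  have hdisj :
      Pairwise (Disjoint on fun x : Fin d → ℤ => (· + T (intPoint x)) '' (T '' unitCube d)) := by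
    have himage (x : Fin d → ℤ) : (· + T (intPoint x)) '' (T '' unitCube d) =
        T '' ((· + intPoint x) '' unitCube d) := by
      simp only [image_image, map_add]
    intro x y hxy
    simp only [onFun, himage]
    exact (disjoint_image_iff T.injective).mpr
      (pairwise_disjoint_image_add_intPoint_unitCube hxy)
  calc _ = ∑' x : Fin d → ℤ, ∫⁻ u in T '' unitCube d,
        (closedBall 0 r).indicator (fun _ => (1 : ℝ≥0∞)) (a + (u + T (intPoint x))) := by
        refine tsum_congr fun x => lintegral_congr fun u => ?_
        rw [add_comm (T _) a, add_assoc, add_comm (T _)]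
    _ ≤ ∫⁻ w, (closedBall 0 r).indicator (fun _ => (1 : ℝ≥0∞)) (a + w) :=
        tsum_setLIntegral_comp_add_le volume (measurableSet_image_unitCube T) _ hdisj _
    _ = volume (closedBall (0 : EuclideanSpace ℝ (Fin d)) r) := by
        rw [lintegral_add_left_eq_self ((closedBall 0 r).indicator fun _ => (1 : ℝ≥0∞)),
          lintegral_indicator_const measurableSet_closedBall, one_mul]

noncomputable def latticeCount (ρ : ℝ) : ℝ≥0∞ :=
  ∑' z : Fin d → ℤ, (closedBall 0 ρ).indicator (fun _ => 1) (T (intPoint z))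

theorem measurable_latticeCount_comp {f : EuclideanSpace ℝ (Fin d) → ℝ} (hf : Measurable f) :
    Measurable fun a => latticeCount T (f a) := by
  unfold latticeCount
  refine Measurable.tsum fun z => ?_
  classical
  simp only [Set.indicator_apply, mem_closedBall_zero_iff]
  exact Measurable.ite (measurableSet_le measurable_const hf) measurable_const measurable_const

theorem tsum_indicator_closedBall_sub_eq_latticeCount (ρ : ℝ) (x : Fin d → ℤ) :
    ∑' y, (closedBall 0 ρ).indicator (fun _ => (1 : ℝ≥0∞)) (T (intPoint y) - T (intPoint x)) =
      latticeCount T ρ := by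
  rw [latticeCount, ← (Equiv.addRight x).tsum_eq]
  simp [intPoint_add]

theorem sq_tsum_indicator_closedBall_le_latticeCount
    (D : (Fin d → ℤ) → EuclideanSpace ℝ (Fin d)) (u : EuclideanSpace ℝ (Fin d)) (r : ℝ) :
    (∑' x, (closedBall 0 r).indicator (fun _ => (1 : ℝ≥0∞)) (T (intPoint x) + D x + u)) ^ 2 ≤
      2 * ∑' x, (closedBall 0 r).indicator (fun _ => 1) (T (intPoint x) + D x + u) *
        latticeCount T (2 * r + 2 * ‖D x‖) := by
  simpa only [tsum_indicator_closedBall_sub_eq_latticeCount] using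
    sq_tsum_indicator_closedBall_le (fun x => T (intPoint x)) D u r

theorem latticeCount_le {c : ℝ≥0} (hc : ∀ w, ‖w‖ ≤ c * ‖T w‖) (ρ : ℝ≥0) :
    latticeCount T ρ ≤ ((2 * (c * ρ) + 1 : ℝ≥0) : ℝ≥0∞) ^ d := by
  refine le_trans (ENNReal.tsum_le_tsum fun z => ?_) (tsum_indicator_norm_intPoint_le (c * ρ))
  by_cases hz : T (intPoint z) ∈ closedBall 0 ρ
  · have : ‖intPoint z‖ ≤ c * ρ :=
      (hc _).trans (mul_le_mul_of_nonneg_left (mem_closedBall_zero_iff.mp hz) c.2)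
    rw [indicator_of_mem hz, indicator_of_mem (by exact_mod_cast this)]
  · rw [indicator_of_notMem hz]
    exact zero_le

theorem lintegral_latticeCount_lt_top (π : Measure (EuclideanSpace ℝ (Fin d))) [IsFiniteMeasure π]
    (r : ℝ≥0)
    (hmom : ∫⁻ a, (‖a‖₊ : ℝ≥0∞) ^ d ∂π < ⊤) :
    ∫⁻ a, latticeCount T (2 * r + 2 * ‖a‖) ∂π < ⊤ := by
  obtain ⟨c, hc⟩ : ∃ c : ℝ≥0, ∀ w, ‖w‖ ≤ c * ‖T w‖ :=
    ⟨_, T.toContinuousLinearEquiv.antilipschitz.le_mul_norm (map_zero _)⟩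
  have hbound (a : EuclideanSpace ℝ (Fin d)) : latticeCount T (2 * r + 2 * ‖a‖) ≤
      2 ^ (d - 1) * (((4 * c * r + 1) ^ d : ℝ≥0) + ((4 * c) ^ d : ℝ≥0) * (‖a‖₊ : ℝ≥0∞) ^ d) := by
    calc latticeCount T (2 * r + 2 * ‖a‖) = latticeCount T ((2 * r + 2 * ‖a‖₊ : ℝ≥0)) := by
          push_cast; rfl
      _ ≤ ((2 * (c * (2 * r + 2 * ‖a‖₊)) + 1 : ℝ≥0) : ℝ≥0∞) ^ d := latticeCount_le T hc _
      _ ≤ ((2 ^ (d - 1) * ((4 * c * r + 1) ^ d + (4 * c * ‖a‖₊) ^ d) : ℝ≥0) : ℝ≥0∞) := by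
          rw [← ENNReal.coe_pow, ENNReal.coe_le_coe, show 2 * (c * (2 * r + 2 * ‖a‖₊)) + 1 =
            (4 * c * r + 1) + 4 * c * ‖a‖₊ by ring]
          exact add_pow_le zero_le zero_le d
      _ = _ := by push_cast; ring
  calc _ ≤ _ := lintegral_mono hbound
    _ = 2 ^ (d - 1) * (((4 * c * r + 1) ^ d : ℝ≥0) * π univ +
          ((4 * c) ^ d : ℝ≥0) * ∫⁻ a, (‖a‖₊ : ℝ≥0∞) ^ d ∂π) := by
      rw [lintegral_const_mul' _ _ (by finiteness), lintegral_add_left measurable_const,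
        lintegral_const, lintegral_const_mul' _ _ ENNReal.coe_ne_top]
    _ < ⊤ := by finiteness

theorem tsum_lintegral_indicator_mul_le (π : Measure (EuclideanSpace ℝ (Fin d))) [SFinite π] (r : ℝ)
    {Φ : EuclideanSpace ℝ (Fin d) → ℝ≥0∞} (hΦ : Measurable Φ) :
    ∑' x : Fin d → ℤ, ∫⁻ q, (closedBall 0 r).indicator (fun _ => (1 : ℝ≥0∞))
        (T (intPoint x) + q.2 + q.1) * Φ q.2 ∂((volume.restrict (T '' unitCube d)).prod π) ≤
      volume (closedBall (0 : EuclideanSpace ℝ (Fin d)) r) * ∫⁻ a, Φ a ∂π := by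
  have hind (x : Fin d → ℤ) (a : EuclideanSpace ℝ (Fin d)) :
      Measurable fun u =>
        (closedBall 0 r).indicator (fun _ => (1 : ℝ≥0∞)) (T (intPoint x) + a + u) :=
    (measurable_const.indicator measurableSet_closedBall).comp (measurable_const_add _)
  have hG (x : Fin d → ℤ) := measurable_indicator_closedBall_add_mul (T (intPoint x)) r hΦ
  rw [← lintegral_tsum fun x => (hG x).aemeasurable,
    lintegral_prod_symm _ (Measurable.tsum hG).aemeasurable, ← lintegral_const_mul _ hΦ]
  refine lintegral_mono fun a => ?_
  dsimp only
  rw [lintegral_tsum fun x => ((hind x a).mul_const _).aemeasurable]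
  simp_rw [lintegral_mul_const _ (hind _ a), ENNReal.tsum_mul_right]
  gcongr
  exact tsum_setLIntegral_indicator_closedBall_le T a r

end Lattice

theorem second_moment_of_number_of_points_finite_general
    (d : ℕ)
    (T : EuclideanSpace ℝ (Fin d) ≃ₗ[ℝ] EuclideanSpace ℝ (Fin d))
    {Ω : Type} [MeasureSpace Ω] [IsProbabilityMeasure (ℙ : Measure Ω)]
    (p : (Fin d → ℤ) → Ω → EuclideanSpace ℝ (Fin d))
    (hpm : ∀ x, Measurable (p x))
    (hinv : ∀ z : Fin d → ℤ,
      Measure.map (fun ω => fun x => p (x + z) ω) (ℙ : Measure Ω)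
        = Measure.map (fun ω => fun x => p x ω) (ℙ : Measure Ω))
    (U : Ω → EuclideanSpace ℝ (Fin d)) (hUm : Measurable U)
    (hU : Measure.map U (ℙ : Measure Ω)
        = volume.restrict
            (⇑T '' ((WithLp.toLp 2 '' (Set.univ.pi fun _ : Fin d => Set.Ico (0:ℝ) 1)) :
              Set (EuclideanSpace ℝ (Fin d)))))
    (hUindep : IndepFun U (fun ω => fun x => p x ω) (ℙ : Measure Ω))
    (hmom : (∫⁻ ω, (‖p 0 ω‖₊ : ℝ≥0∞) ^ d ∂ℙ) < ⊤) :
    ∀ r : ℝ, 0 < r →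
      (∫⁻ ω, (∑' x : Fin d → ℤ,
        (closedBall (0 : EuclideanSpace ℝ (Fin d)) r).indicator (fun _ => (1 : ℝ≥0∞))
          (T ((WithLp.toLp 2 (fun i => (x i : ℝ))) : EuclideanSpace ℝ (Fin d)) + p x ω + U ω)) ^ 2 ∂ℙ) < ⊤ := by
  intro r hr
  set π := Measure.map (p 0) ℙ
  have hΦ : Measurable fun a : EuclideanSpace ℝ (Fin d) => latticeCount T (2 * r + 2 * ‖a‖) :=
    measurable_latticeCount_comp T (by fun_prop)
  have hmom' : ∫⁻ a, (‖a‖₊ : ℝ≥0∞) ^ d ∂π < ⊤ := by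
    rwa [lintegral_map (measurable_nnnorm.coe_nnreal_ennreal.pow_const d) (hpm 0)]
  have hΦ_lt_top := lintegral_latticeCount_lt_top T π r.toNNReal hmom'
  rw [Real.coe_toNNReal r hr.le] at hΦ_lt_top
  have hlaw (x : Fin d → ℤ) :
      Measure.map (fun ω => (U ω, p x ω)) ℙ = (volume.restrict (T '' unitCube d)).prod π := by
    rw [map_prod_eq_prod_map_of_indepFun_of_map_shift_eq hUm hpm hinv hUindep x, hU]
    rfl
  calc _ ≤ ∫⁻ ω, 2 * ∑' x, (closedBall 0 r).indicator (fun _ => (1 : ℝ≥0∞))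
          (T (intPoint x) + p x ω + U ω) * latticeCount T (2 * r + 2 * ‖p x ω‖) ∂ℙ :=
        lintegral_mono fun ω => sq_tsum_indicator_closedBall_le_latticeCount T (p · ω) (U ω) r
    _ = 2 * ∑' x, ∫⁻ q, (closedBall 0 r).indicator (fun _ => (1 : ℝ≥0∞))
          (T (intPoint x) + q.2 + q.1) * latticeCount T (2 * r + 2 * ‖q.2‖)
          ∂((volume.restrict (T '' unitCube d)).prod π) := by
        rw [lintegral_const_mul' _ _ (by norm_num)]
        exact congrArg (2 * ·) (lintegral_tsum_comp_eq_tsum_lintegral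
          (fun x => hUm.prodMk (hpm x)) hlaw
          fun x => measurable_indicator_closedBall_add_mul (T (intPoint x)) r hΦ)
    _ ≤ 2 * (volume (closedBall (0 : EuclideanSpace ℝ (Fin d)) r) *
          ∫⁻ a, latticeCount T (2 * r + 2 * ‖a‖) ∂π) := by
        gcongr
        exact tsum_lintegral_indicator_mul_le T π r hΦ
    _ < ⊤ := ENNReal.mul_lt_top (by norm_num)
        (ENNReal.mul_lt_top measure_closedBall_lt_top hΦ_lt_top)

/-- If the perturbations have finite d-th moment `E[|p_0|^d] < ∞`, then the
perturbed lattice has finite second moment of the number of points in every ball `B_r`,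
`r > 0`; in particular the number variance in every finite ball is finite. -/
theorem second_moment_of_number_of_points_finite
    (d : ℕ) (hd : 1 ≤ d)
    (T : EuclideanSpace ℝ (Fin d) ≃ₗ[ℝ] EuclideanSpace ℝ (Fin d))
    (hT : |LinearMap.det (T : EuclideanSpace ℝ (Fin d) →ₗ[ℝ] EuclideanSpace ℝ (Fin d))| = 1)
    {Ω : Type} [MeasureSpace Ω] [IsProbabilityMeasure (ℙ : Measure Ω)]
    (p : (Fin d → ℤ) → Ω → EuclideanSpace ℝ (Fin d))
    (hpm : ∀ x, Measurable (p x))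
    (hinv : ∀ z : Fin d → ℤ,
      Measure.map (fun ω => fun x => p (x + z) ω) (ℙ : Measure Ω)
        = Measure.map (fun ω => fun x => p x ω) (ℙ : Measure Ω))
    (U : Ω → EuclideanSpace ℝ (Fin d)) (hUm : Measurable U)
    (hU : Measure.map U (ℙ : Measure Ω)
        = volume.restrict
            (⇑T '' ((WithLp.toLp 2 '' (Set.univ.pi fun _ : Fin d => Set.Ico (0:ℝ) 1)) :
              Set (EuclideanSpace ℝ (Fin d)))))
    (hUindep : IndepFun U (fun ω => fun x => p x ω) (ℙ : Measure Ω))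
    (hmom : (∫⁻ ω, (‖p 0 ω‖₊ : ℝ≥0∞) ^ d ∂ℙ) < ⊤) :
    ∀ r : ℝ, 0 < r →
      (∫⁻ ω, (∑' x : Fin d → ℤ,
        (closedBall (0 : EuclideanSpace ℝ (Fin d)) r).indicator (fun _ => (1 : ℝ≥0∞))
          (T ((WithLp.toLp 2 (fun i => (x i : ℝ))) : EuclideanSpace ℝ (Fin d)) + p x ω + U ω)) ^ 2 ∂ℙ) < ⊤ :=
  second_moment_of_number_of_points_finite_general d T p hpm hinv U hUm hU hUindep hmom
end

section
/- Consider a perturbed lattice in ℝ^d with ℤ^d-invariant perturbations (p_x)_{x∈ℤ^d} and independent uniform shift U on the fundamental domain D = T([0,1)^d). Then for every Borel set B ⊆ ℝ^d the following identity holds in [0,∞]: E[ ∑_{x,y ∈ ℤ^d, x ≠ y} 1{T x + p_x + U ∈ D} · 1{(T y + p_y) − (T x + p_x) ∈ B} ] = E[ ∑_{y ∈ ℤ^d, y ≠ 0} 1{T y + p_y − p_0 ∈ B} ]. (This identifies the reduced second factorial moment measure of the perturbed lattice.) -/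
open MeasureTheory ProbabilityTheory Set
open scoped ENNReal

/-!
Put `z = y - x`. Since `U` is uniform on `D` and independent of the perturbations, integrating
out `U` turns `1{Tx + p_x + U ∈ D}` into the covariogram `vol (D ∩ (D - Tx - p_x))`, and
stationarity replaces `(p_x, p_{x+z})` by `(p_0, p_z)`. As `D` is a fundamental domain of the
lattice, the sets `D - Tx - a` tile the space, so the covariograms at `Tx + a` sum over `x` to
`vol D = 1` for every `a`; what remains is `E[1{Tz + p_z - p_0 ∈ B}]`.
-/

section Covariogram

variable {E : Type*} [MeasurableSpace E] [AddCommGroup E]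

noncomputable def covariogram (μ : Measure E) (s : Set E) (c : E) : ℝ≥0∞ :=
  μ (s ∩ (c + ·) ⁻¹' s)

variable [MeasurableAdd₂ E] {μ : Measure E} {s : Set E}

theorem measurable_covariogram [SFinite μ] (hs : MeasurableSet s) :
    Measurable (covariogram μ s) :=
  measurable_measure_prodMk_left ((hs.preimage measurable_snd).inter (hs.preimage measurable_add))

theorem setLIntegral_indicator_add (hs : MeasurableSet s) (c : E) :
    ∫⁻ u in s, s.indicator (fun _ => 1) (c + u) ∂μ = covariogram μ s c := by
  have hpre : MeasurableSet ((c + ·) ⁻¹' s) := hs.preimage (measurable_const_add c)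
  simp_rw [← indicator_comp_right (c + ·), Function.comp_def]
  rw [lintegral_indicator_const hpre, one_mul, Measure.restrict_apply hpre, inter_comm]
  rfl

theorem MeasureTheory.IsAddFundamentalDomain.tsum_covariogram_add [μ.IsAddLeftInvariant]
    {L : AddSubgroup E} [Countable L] (hs : IsAddFundamentalDomain L s μ) (a : E) :
    ∑' g : L, covariogram μ s (g + a) = μ s := by
  rw [← measure_preimage_add μ a s, hs.measure_eq_tsum, ← (Equiv.neg L).tsum_eq]
  refine tsum_congr fun g => ?_
  rw [covariogram, inter_comm]
  congr 1
  ext u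
  rw [mem_inter_iff, mem_inter_iff, mem_preimage, mem_vadd_set_iff_neg_vadd_mem,
    mem_preimage, AddSubgroup.vadd_def, vadd_eq_add, add_left_comm, ← add_assoc]
  rfl

theorem tsum_lintegral_covariogram_add_mul {Λ Ω : Type*} [Countable Λ] [MeasurableSpace Ω]
    {P : Measure Ω} [SFinite μ] {ℓ : Λ → E} (hcov : ∀ a, ∑' x, covariogram μ s (ℓ x + a) = 1)
    (hs : MeasurableSet s) {Y : Ω → E} (hY : Measurable Y) {g : Ω → ℝ≥0∞} (hg : Measurable g) :
    ∑' x, ∫⁻ ω, covariogram μ s (ℓ x + Y ω) * g ω ∂P = ∫⁻ ω, g ω ∂P := by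
  have := measurable_covariogram (μ := μ) hs
  rw [← lintegral_tsum fun x => by fun_prop]
  simp_rw [ENNReal.tsum_mul_right, hcov, one_mul]

end Covariogram

theorem ProbabilityTheory.IndepFun.lintegral_comp_eq_lintegral_lintegral_map
    {Ω α β : Type*} [MeasurableSpace Ω] [MeasurableSpace α] [MeasurableSpace β]
    {μ : Measure Ω} [IsFiniteMeasure μ] {X : Ω → α} {Y : Ω → β} (hXY : IndepFun X Y μ)
    (hX : Measurable X) (hY : Measurable Y) {F : α → β → ℝ≥0∞}
    (hF : Measurable (Function.uncurry F)) :
    ∫⁻ ω, F (X ω) (Y ω) ∂μ = ∫⁻ ω, ∫⁻ a, F a (Y ω) ∂(μ.map X) ∂μ :=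
  calc ∫⁻ ω, F (X ω) (Y ω) ∂μ
      = ∫⁻ q, Function.uncurry F q ∂(μ.map fun ω => (X ω, Y ω)) :=
        (lintegral_map hF (hX.prodMk hY)).symm
    _ = ∫⁻ q, Function.uncurry F q ∂((μ.map X).prod (μ.map Y)) := by
        rw [(indepFun_iff_map_prod_eq_prod_map_map hX.aemeasurable hY.aemeasurable).mp hXY]
    _ = ∫⁻ y, ∫⁻ a, F a y ∂(μ.map X) ∂(μ.map Y) := lintegral_prod_symm _ hF.aemeasurable
    _ = ∫⁻ ω, ∫⁻ a, F a (Y ω) ∂(μ.map X) ∂μ := lintegral_map hF.lintegral_prod_left' hY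

namespace PerturbedLattice

section Abstract

variable {Λ E Ω : Type*} [AddCommGroup Λ] [MeasurableSpace E] [AddCommGroup E]
  [MeasurableAdd₂ E] [MeasurableSub₂ E] [MeasurableSpace Ω] {P : Measure Ω} [IsFiniteMeasure P]
  {μ : Measure E} [SFinite μ] {D B : Set E} {p : Λ → Ω → E} {U : Ω → E}

theorem lintegral_indicator_mul_indicator_eq_lintegral_covariogram_mul
    (hp : ∀ x, Measurable (p x))
    (hstat : ∀ z, P.map (fun ω x => p (x + z) ω) = P.map (fun ω x => p x ω))
    (hUm : Measurable U) (hU : P.map U = μ.restrict D)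
    (hindep : IndepFun U (fun ω x => p x ω) P) (hD : MeasurableSet D) (hB : MeasurableSet B)
    (c w : E) (x z : Λ) :
    ∫⁻ ω, D.indicator (fun _ => 1) (c + p x ω + U ω) *
        B.indicator (fun _ => 1) (w + p (x + z) ω - p x ω) ∂P =
      ∫⁻ ω, covariogram μ D (c + p 0 ω) * B.indicator (fun _ => 1) (w + p z ω - p 0 ω) ∂P := by
  have hpath : Measurable fun ω x => p x ω := measurable_pi_lambda _ hp
  let G : (Λ → E) → ℝ≥0∞ := fun φ =>
    covariogram μ D (c + φ 0) * B.indicator (fun _ => 1) (w + φ z - φ 0)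
  have hG : Measurable G := by
    have := measurable_covariogram (μ := μ) hD
    fun_prop
  have hshift : IdentDistrib (fun ω y => p (y + x) ω) (fun ω y => p y ω) P P :=
    ⟨(measurable_pi_lambda _ fun y => hp (y + x)).aemeasurable, hpath.aemeasurable, hstat x⟩
  calc _ = ∫⁻ ω, covariogram μ D (c + p x ω) *
          B.indicator (fun _ => 1) (w + p (x + z) ω - p x ω) ∂P := by
        rw [hindep.lintegral_comp_eq_lintegral_lintegral_map (F := fun u φ =>
          D.indicator (fun _ => 1) (c + φ x + u) * B.indicator (fun _ => 1) (w + φ (x + z) - φ x))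
          hUm hpath (by fun_prop), hU]
        refine lintegral_congr fun ω => ?_
        rw [lintegral_mul_const _ (by fun_prop), setLIntegral_indicator_add hD]
    _ = ∫⁻ ω, G (fun y => p (y + x) ω) ∂P := by simp [G, add_comm z x]
    _ = ∫⁻ ω, G (fun y => p y ω) ∂P := (hshift.comp hG).lintegral_eq

theorem lintegral_tsum_pairs_eq_lintegral_tsum [Countable Λ] [DecidableEq Λ] (ℓ : Λ →+ E)
    (hp : ∀ x, Measurable (p x))
    (hstat : ∀ z, P.map (fun ω x => p (x + z) ω) = P.map (fun ω x => p x ω))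
    (hUm : Measurable U) (hU : P.map U = μ.restrict D)
    (hindep : IndepFun U (fun ω x => p x ω) P) (hD : MeasurableSet D) (hB : MeasurableSet B)
    (hcov : ∀ a, ∑' x, covariogram μ D (ℓ x + a) = 1) :
    ∫⁻ ω, ∑' q : Λ × Λ, (if q.1 ≠ q.2 then
        D.indicator (fun _ => 1) (ℓ q.1 + p q.1 ω + U ω) *
          B.indicator (fun _ => 1) ((ℓ q.2 + p q.2 ω) - (ℓ q.1 + p q.1 ω)) else 0) ∂P =
      ∫⁻ ω, ∑' y, (if y ≠ 0 then B.indicator (fun _ => 1) (ℓ y + p y ω - p 0 ω) else 0) ∂P := by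
  have hdiff : ∀ x z ω,
      (ℓ (x + z) + p (x + z) ω) - (ℓ x + p x ω) = ℓ z + p (x + z) ω - p x ω :=
    fun x z ω => by rw [map_add]; abel
  rw [lintegral_tsum fun q => by split_ifs <;> fun_prop,
    lintegral_tsum fun y => by split_ifs <;> fun_prop,
    ← (Equiv.prodShear (Equiv.refl Λ) Equiv.addLeft).tsum_eq]
  simp only [Equiv.prodShear_apply, Equiv.refl_apply, Equiv.coe_addLeft, ne_eq, left_eq_add]
  rw [ENNReal.tsum_prod', ENNReal.tsum_comm]
  refine tsum_congr fun z => ?_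
  split_ifs
  · simp
  · simp_rw [hdiff,
      lintegral_indicator_mul_indicator_eq_lintegral_covariogram_mul hp hstat hUm hU hindep hD hB]
    exact tsum_lintegral_covariogram_add_mul hcov hD (hp 0) (by fun_prop)

end Abstract

section Euclidean

variable {d : ℕ} (T : EuclideanSpace ℝ (Fin d) ≃ₗ[ℝ] EuclideanSpace ℝ (Fin d))

def unitBox (d : ℕ) : Set (EuclideanSpace ℝ (Fin d)) :=
  WithLp.ofLp ⁻¹' univ.pi fun _ => Ico 0 1

noncomputable def latticeHom : (Fin d → ℤ) →+ EuclideanSpace ℝ (Fin d) :=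
  AddMonoidHom.mk' (fun x => T (WithLp.toLp 2 fun i => (x i : ℝ))) fun x y => by
    rw [← map_add, ← WithLp.toLp_add]
    congr 2
    ext i
    simp

theorem image_unitBox_eq_fundamentalDomain :
    T '' unitBox d = ZSpan.fundamentalDomain ((PiLp.basisFun 2 ℝ (Fin d)).map T) := by
  rw [← ZSpan.map_fundamentalDomain]
  congr 1
  ext v
  simp [unitBox, ZSpan.mem_fundamentalDomain]

theorem measurableSet_image_unitBox : MeasurableSet (T '' unitBox d) := by
  rw [image_unitBox_eq_fundamentalDomain]
  exact ZSpan.fundamentalDomain_measurableSet _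

theorem volume_image_unitBox (hT : |LinearMap.det T.toLinearMap| = 1) :
    volume (T '' unitBox d) = 1 := by
  rw [← LinearEquiv.coe_coe, Measure.addHaar_image_linearMap, hT, unitBox,
    (PiLp.volume_preserving_ofLp (Fin d)).measure_preimage
      (MeasurableSet.univ_pi fun _ => measurableSet_Ico).nullMeasurableSet, volume_pi_pi]
  simp

theorem coe_restrictScalars_equivFun_symm_map_basisFun (x : Fin d → ℤ) :
    ((((PiLp.basisFun 2 ℝ (Fin d)).map T).restrictScalars ℤ).equivFun.symm x :
      EuclideanSpace ℝ (Fin d)) = latticeHom T x := by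
  rw [latticeHom, AddMonoidHom.mk'_apply,
    ← (PiLp.basisFun 2 ℝ (Fin d)).sum_repr (WithLp.toLp 2 _)]
  simp [Module.Basis.equivFun_symm_apply, map_sum, Int.cast_smul_eq_zsmul]

theorem tsum_covariogram_latticeHom_add (hT : |LinearMap.det T.toLinearMap| = 1)
    (a : EuclideanSpace ℝ (Fin d)) :
    ∑' x, covariogram volume (T '' unitBox d) (latticeHom T x + a) = 1 := by
  set b := (PiLp.basisFun 2 ℝ (Fin d)).map T
  set L := (Submodule.span ℤ (range b)).toAddSubgroup
  let e : (Fin d → ℤ) ≃ L := (b.restrictScalars ℤ).equivFun.symm.toEquiv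
  have : Countable L := e.surjective.countable
  calc ∑' x, covariogram volume (T '' unitBox d) (latticeHom T x + a)
      = ∑' x, covariogram volume (ZSpan.fundamentalDomain b) (e x + a) := by
        refine tsum_congr fun x => ?_
        rw [image_unitBox_eq_fundamentalDomain, ← coe_restrictScalars_equivFun_symm_map_basisFun]
        rfl
    _ = ∑' g : L, covariogram volume (ZSpan.fundamentalDomain b) (g + a) :=
        e.tsum_eq fun g : L => covariogram volume (ZSpan.fundamentalDomain b) (g + a)
    _ = 1 := by
        rw [(ZSpan.isAddFundamentalDomain' b volume).tsum_covariogram_add,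
          ← image_unitBox_eq_fundamentalDomain, volume_image_unitBox T hT]

end Euclidean

end PerturbedLattice

theorem reduced_second_factorial_moment_measure_of_perturbed_lattice_general
    (d : ℕ)
    (T : EuclideanSpace ℝ (Fin d) ≃ₗ[ℝ] EuclideanSpace ℝ (Fin d))
    (hT : |LinearMap.det (T : EuclideanSpace ℝ (Fin d) →ₗ[ℝ] EuclideanSpace ℝ (Fin d))| = 1)
    {Ω : Type} [MeasureSpace Ω] [IsProbabilityMeasure (ℙ : Measure Ω)]
    (p : (Fin d → ℤ) → Ω → EuclideanSpace ℝ (Fin d))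
    (hpm : ∀ x, Measurable (p x))
    (hinv : ∀ z : Fin d → ℤ,
      Measure.map (fun ω => fun x => p (x + z) ω) (ℙ : Measure Ω)
        = Measure.map (fun ω => fun x => p x ω) (ℙ : Measure Ω))
    (U : Ω → EuclideanSpace ℝ (Fin d)) (hUm : Measurable U)
    (hU : Measure.map U (ℙ : Measure Ω)
        = volume.restrict
            (⇑T '' (WithLp.ofLp ⁻¹' (Set.univ.pi fun _ : Fin d => Set.Ico (0:ℝ) 1) :
              Set (EuclideanSpace ℝ (Fin d)))))
    (hUindep : IndepFun U (fun ω => fun x => p x ω) (ℙ : Measure Ω))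
    (B : Set (EuclideanSpace ℝ (Fin d))) (hB : MeasurableSet B) :
    (∫⁻ ω, ∑' q : (Fin d → ℤ) × (Fin d → ℤ),
        (if q.1 ≠ q.2 then
          ((⇑T '' (WithLp.ofLp ⁻¹' (Set.univ.pi fun _ : Fin d => Set.Ico (0:ℝ) 1) :
              Set (EuclideanSpace ℝ (Fin d)))).indicator (fun _ => (1 : ℝ≥0∞))
            (T (WithLp.toLp 2 (fun i => (q.1 i : ℝ)) : EuclideanSpace ℝ (Fin d)) + p q.1 ω + U ω)) *
          (B.indicator (fun _ => (1 : ℝ≥0∞))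
            ((T (WithLp.toLp 2 (fun i => (q.2 i : ℝ)) : EuclideanSpace ℝ (Fin d)) + p q.2 ω)
              - (T (WithLp.toLp 2 (fun i => (q.1 i : ℝ)) : EuclideanSpace ℝ (Fin d)) + p q.1 ω)))
         else 0) ∂ℙ)
    = ∫⁻ ω, ∑' y : Fin d → ℤ,
        (if y ≠ 0 then
          B.indicator (fun _ => (1 : ℝ≥0∞))
            (T (WithLp.toLp 2 (fun i => (y i : ℝ)) : EuclideanSpace ℝ (Fin d)) + p y ω - p 0 ω)
         else 0) ∂ℙ :=
  PerturbedLattice.lintegral_tsum_pairs_eq_lintegral_tsum (PerturbedLattice.latticeHom T) hpm hinv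
    hUm hU hUindep (PerturbedLattice.measurableSet_image_unitBox T) hB
    (PerturbedLattice.tsum_covariogram_latticeHom_add T hT)

/-- Identification of the reduced second factorial moment measure of a
perturbed lattice: for every Borel set `B`,
`E[ ∑_{x ≠ y} 1{Tx + p_x + U ∈ D} 1{(Ty + p_y) − (Tx + p_x) ∈ B} ]
  = E[ ∑_{y ≠ 0} 1{Ty + p_y − p_0 ∈ B} ]` in `[0,∞]`. -/
theorem reduced_second_factorial_moment_measure_of_perturbed_lattice
    (d : ℕ) (hd : 1 ≤ d)
    (T : EuclideanSpace ℝ (Fin d) ≃ₗ[ℝ] EuclideanSpace ℝ (Fin d))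
    (hT : |LinearMap.det (T : EuclideanSpace ℝ (Fin d) →ₗ[ℝ] EuclideanSpace ℝ (Fin d))| = 1)
    {Ω : Type} [MeasureSpace Ω] [IsProbabilityMeasure (ℙ : Measure Ω)]
    (p : (Fin d → ℤ) → Ω → EuclideanSpace ℝ (Fin d))
    (hpm : ∀ x, Measurable (p x))
    (hinv : ∀ z : Fin d → ℤ,
      Measure.map (fun ω => fun x => p (x + z) ω) (ℙ : Measure Ω)
        = Measure.map (fun ω => fun x => p x ω) (ℙ : Measure Ω))
    (U : Ω → EuclideanSpace ℝ (Fin d)) (hUm : Measurable U)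
    (hU : Measure.map U (ℙ : Measure Ω)
        = volume.restrict
            (⇑T '' (WithLp.ofLp ⁻¹' (Set.univ.pi fun _ : Fin d => Set.Ico (0:ℝ) 1) :
              Set (EuclideanSpace ℝ (Fin d)))))
    (hUindep : IndepFun U (fun ω => fun x => p x ω) (ℙ : Measure Ω))
    (B : Set (EuclideanSpace ℝ (Fin d))) (hB : MeasurableSet B) :
    (∫⁻ ω, ∑' q : (Fin d → ℤ) × (Fin d → ℤ),
        (if q.1 ≠ q.2 then
          ((⇑T '' (WithLp.ofLp ⁻¹' (Set.univ.pi fun _ : Fin d => Set.Ico (0:ℝ) 1) :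
              Set (EuclideanSpace ℝ (Fin d)))).indicator (fun _ => (1 : ℝ≥0∞))
            (T (WithLp.toLp 2 (fun i => (q.1 i : ℝ)) : EuclideanSpace ℝ (Fin d)) + p q.1 ω + U ω)) *
          (B.indicator (fun _ => (1 : ℝ≥0∞))
            ((T (WithLp.toLp 2 (fun i => (q.2 i : ℝ)) : EuclideanSpace ℝ (Fin d)) + p q.2 ω)
              - (T (WithLp.toLp 2 (fun i => (q.1 i : ℝ)) : EuclideanSpace ℝ (Fin d)) + p q.1 ω)))
         else 0) ∂ℙ)
    = ∫⁻ ω, ∑' y : Fin d → ℤ,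
        (if y ≠ 0 then
          B.indicator (fun _ => (1 : ℝ≥0∞))
            (T (WithLp.toLp 2 (fun i => (y i : ℝ)) : EuclideanSpace ℝ (Fin d)) + p y ω - p 0 ω)
         else 0) ∂ℙ :=
  reduced_second_factorial_moment_measure_of_perturbed_lattice_general d T hT p hpm hinv U hUm hU
    hUindep B hB
end

section
/- Let d ≥ 1 and let T : ℝ^d → ℝ^d be an invertible linear map with |det T| = 1. There is a constant C > 0, depending only on d and T, with the following property: for every m ≥ 1, every continuous function f : ℝ^d → ℝ with support contained in the ball B_m, every M ≥ 10 m, and every ℤ^d-invariant family of perturbations (p_x)_{x∈ℤ^d}, one has E[ ∑_{x ∈ ℤ^d, |T x| ≥ M} |f(T x + p_x − p_0)| ] ≤ C · (sup |f|) · E[ |p_0|^d · 1{|p_0| ≥ M/4} ] (an inequality in [0,∞]). -/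
open MeasureTheory ProbabilityTheory Filter Set Metric
open scoped ENNReal

/-!
If `f (Tx + p_x - p_0) ≠ 0` then `‖Tx‖ - m ≤ ‖p_x‖ + ‖p_0‖`, so one of `‖p_x‖`, `‖p_0‖` is at
least `(‖Tx‖ - m) / 2`. Bounding `|f|` by its supremum on that event and using that `p_x` has the
law of `p_0`, the expectation is at most `2 sup |f|` times the expected number of lattice points
`x` with `M ≤ ‖Tx‖ ≤ 2 ‖p_0‖ + m`. This set is empty unless `‖p_0‖ ≥ M / 4`, and then it lies in
the ball of radius `3 ‖p_0‖`, which contains at most `((6 ‖T⁻¹‖ + 1) ‖p_0‖) ^ d` lattice points.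
-/

theorem norm_le_two_mul_norm_add_of_norm_add_sub_le {E : Type*} [SeminormedAddCommGroup E]
    {v a b : E} {m : ℝ} (h : ‖v + a - b‖ ≤ m) : ‖v‖ ≤ 2 * ‖a‖ + m ∨ ‖v‖ ≤ 2 * ‖b‖ + m := by
  have : ‖v‖ ≤ ‖v + a - b‖ + ‖a‖ + ‖b‖ :=
    calc ‖v‖ = ‖(v + a - b) - a + b‖ := by congr 1; abel
      _ ≤ ‖v + a - b - a‖ + ‖b‖ := norm_add_le _ _
      _ ≤ ‖v + a - b‖ + ‖a‖ + ‖b‖ := by gcongr; exact norm_sub_le _ _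
  rcases le_total ‖a‖ ‖b‖ with hab | hab
  · exact .inr (by linarith)
  · exact .inl (by linarith)

section Stationary

variable {Ω E F : Type*} [MeasurableSpace Ω] {μ : Measure Ω} [MeasurableSpace E]

theorem lintegral_enorm_apply_add_sub_le [SeminormedAddCommGroup E] [OpensMeasurableSpace E]
    [NormedAddCommGroup F] {X Y : Ω → E} (hX : Measurable X) (hY : Measurable Y)
    (hXY : μ.map X = μ.map Y) {f : E → F} {m : ℝ} (hf : ∀ t ∉ closedBall 0 m, f t = 0) (v : E) :
    ∫⁻ ω, ‖f (v + X ω - Y ω)‖ₑ ∂μ ≤ 2 * (⨆ t, ‖f t‖ₑ) * μ {ω | ‖v‖ ≤ 2 * ‖Y ω‖ + m} := by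
  set S := ⨆ t, ‖f t‖ₑ
  set A := {u : E | ‖v‖ ≤ 2 * ‖u‖ + m}
  have hA : MeasurableSet A := measurableSet_le measurable_const (by fun_prop)
  have hpt (ω : Ω) : ‖f (v + X ω - Y ω)‖ₑ ≤
      (X ⁻¹' A).indicator (fun _ => S) ω + (Y ⁻¹' A).indicator (fun _ => S) ω := by
    by_cases h : ‖v + X ω - Y ω‖ ≤ m
    · have hS : ‖f (v + X ω - Y ω)‖ₑ ≤ S := le_iSup (fun t => ‖f t‖ₑ) _
      rcases norm_le_two_mul_norm_add_of_norm_add_sub_le h with hXω | hYω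
      · exact hS.trans (by simp [indicator_of_mem (show ω ∈ X ⁻¹' A from hXω)])
      · exact hS.trans (by simp [indicator_of_mem (show ω ∈ Y ⁻¹' A from hYω)])
    · simp [hf _ (by simpa using h)]
  calc ∫⁻ ω, ‖f (v + X ω - Y ω)‖ₑ ∂μ
      ≤ ∫⁻ ω, (X ⁻¹' A).indicator (fun _ => S) ω + (Y ⁻¹' A).indicator (fun _ => S) ω ∂μ :=
        lintegral_mono hpt
    _ = S * μ (X ⁻¹' A) + S * μ (Y ⁻¹' A) := by
        rw [lintegral_add_left (measurable_const.indicator (hA.preimage hX)),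
          lintegral_indicator_const (hA.preimage hX), lintegral_indicator_const (hA.preimage hY)]
    _ = 2 * S * μ (Y ⁻¹' A) := by
        rw [← Measure.map_apply hX hA, hXY, Measure.map_apply hY hA]
        ring

theorem map_eval_eq_map_eval_zero_of_map_shift_eq {ι : Type*} [AddZeroClass ι] {p : ι → Ω → E}
    (hp : ∀ x, Measurable (p x))
    (hshift : ∀ z, μ.map (fun ω x => p (x + z) ω) = μ.map (fun ω x => p x ω)) (z : ι) :
    μ.map (p z) = μ.map (p 0) := by
  have h := congrArg (Measure.map fun q : ι → E => q 0) (hshift z)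
  rw [Measure.map_map (measurable_pi_apply 0) (measurable_pi_lambda _ fun x => hp (x + z)),
    Measure.map_map (measurable_pi_apply 0) (measurable_pi_lambda _ hp)] at h
  simpa [Function.comp_def] using h

theorem tsum_measure_eq_lintegral_encard {ι : Type*} [Countable ι] {s : ι → Set Ω}
    (hs : ∀ i, MeasurableSet (s i)) :
    ∑' i, μ (s i) = ∫⁻ ω, ({i | ω ∈ s i}.encard : ℝ≥0∞) ∂μ := by
  have hcount (ω : Ω) : ({i | ω ∈ s i}.encard : ℝ≥0∞) = ∑' i, (s i).indicator 1 ω := by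
    rw [← ENNReal.tsum_set_one]
    exact tsum_subtype {i | ω ∈ s i} 1
  simp_rw [hcount]
  rw [lintegral_tsum fun i => (measurable_one.indicator (hs i)).aemeasurable]
  exact tsum_congr fun i => (lintegral_indicator_one (hs i)).symm

theorem lintegral_tsum_enorm_apply_add_sub_le {ι : Type*} [Countable ι] [AddZeroClass ι]
    [SeminormedAddCommGroup E] [BorelSpace E] [SecondCountableTopology E] [NormedAddCommGroup F]
    [MeasurableSpace F] [OpensMeasurableSpace F] {p : ι → Ω → E} (hp : ∀ x, Measurable (p x))
    (hshift : ∀ z, μ.map (fun ω x => p (x + z) ω) = μ.map (fun ω x => p x ω))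
    {f : E → F} (hf : Measurable f) {m : ℝ} (hsupp : ∀ t ∉ closedBall 0 m, f t = 0)
    (v : ι → E) (M : ℝ) :
    ∫⁻ ω, ∑' x, (if M ≤ ‖v x‖ then ‖f (v x + p x ω - p 0 ω)‖ₑ else 0) ∂μ ≤
      2 * (⨆ t, ‖f t‖ₑ) * ∫⁻ ω, ({x | M ≤ ‖v x‖ ∧ ‖v x‖ ≤ 2 * ‖p 0 ω‖ + m}.encard : ℝ≥0∞) ∂μ := by
  calc _ = ∑' x, if M ≤ ‖v x‖ then ∫⁻ ω, ‖f (v x + p x ω - p 0 ω)‖ₑ ∂μ else 0 := by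
        rw [lintegral_tsum fun x => by
          split_ifs
          exacts [(hf.comp (by fun_prop)).enorm.aemeasurable, aemeasurable_const]]
        exact tsum_congr fun x => by split_ifs <;> simp
    _ ≤ ∑' x, 2 * (⨆ t, ‖f t‖ₑ) * μ {ω | M ≤ ‖v x‖ ∧ ‖v x‖ ≤ 2 * ‖p 0 ω‖ + m} := by
        refine ENNReal.tsum_le_tsum fun x => ?_
        split_ifs with hx
        · simpa only [hx, true_and] using lintegral_enorm_apply_add_sub_le (hp x) (hp 0)
            (map_eval_eq_map_eval_zero_of_map_shift_eq hp hshift x) hsupp (v x)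
        · exact zero_le
    _ = _ := by
        rw [ENNReal.tsum_mul_left, tsum_measure_eq_lintegral_encard fun x =>
          measurableSet_setOfPred.2 (by fun_prop)]
        rfl

end Stationary

theorem encard_setOf_forall_abs_le_le {ι : Type*} [Fintype ι] {r : ℝ} (hr : 0 ≤ r) :
    {x : ι → ℤ | ∀ i, |(x i : ℝ)| ≤ r}.encard ≤ ENNReal.ofReal ((2 * r + 1) ^ Fintype.card ι) := by
  classical
  set N : ℕ := ⌊r⌋₊
  have hbox : {x : ι → ℤ | ∀ i, |(x i : ℝ)| ≤ r} =
      ↑(Fintype.piFinset fun _ : ι => Finset.Icc (-(N : ℤ)) N) := by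
    ext x
    simp only [Fintype.coe_piFinset, Finset.coe_Icc, Set.mem_pi, mem_univ, true_implies, mem_Icc,
      ← abs_le]
    refine forall_congr' fun i => ?_
    rw [← Int.cast_abs, Int.abs_eq_natAbs, Int.cast_natCast, Nat.cast_le, Nat.le_floor_iff hr]
  have hcard : (Fintype.piFinset fun _ : ι => Finset.Icc (-(N : ℤ)) N).card =
      (2 * N + 1) ^ Fintype.card ι := by
    simp only [Fintype.card_piFinset, Int.card_Icc, Finset.prod_const, Finset.card_univ]
    congr 1
    omega
  rw [hbox, encard_coe_eq_coe_finsetCard, hcard, ENat.toENNReal_coe, ← ENNReal.ofReal_natCast]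
  have hN : (N : ℝ) ≤ r := Nat.floor_le hr
  push_cast
  gcongr

section LatticeCount

variable {ι F : Type*} [Fintype ι] [SeminormedAddCommGroup F] {g : EuclideanSpace ℝ ι → F} {c : ℝ}

theorem encard_setOf_norm_le_le (hc : 0 ≤ c) (hg : ∀ v, ‖v‖ ≤ c * ‖g v‖) {ρ : ℝ} (hρ : 0 ≤ ρ) :
    {x : ι → ℤ | ‖g (WithLp.toLp 2 fun i => (x i : ℝ))‖ ≤ ρ}.encard ≤
      ENNReal.ofReal ((2 * (c * ρ) + 1) ^ Fintype.card ι) := by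
  refine le_trans (ENat.toENNReal_le.2 <| encard_le_encard ?_)
    (encard_setOf_forall_abs_le_le (by positivity))
  intro x hx i
  calc |(x i : ℝ)| = ‖(WithLp.toLp 2 fun i => (x i : ℝ) : EuclideanSpace ℝ ι) i‖ := rfl
    _ ≤ ‖(WithLp.toLp 2 fun i => (x i : ℝ) : EuclideanSpace ℝ ι)‖ := PiLp.norm_apply_le _ i
    _ ≤ c * ρ := (hg _).trans (mul_le_mul_of_nonneg_left hx hc)

theorem encard_setOf_norm_mem_Icc_le (hc : 0 ≤ c) (hg : ∀ v, ‖v‖ ≤ c * ‖g v‖) {m M R : ℝ}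
    (hm : 1 ≤ m) (hM : 10 * m ≤ M) (hR : 0 ≤ R) :
    {x : ι → ℤ | M ≤ ‖g (WithLp.toLp 2 fun i => (x i : ℝ))‖ ∧
        ‖g (WithLp.toLp 2 fun i => (x i : ℝ))‖ ≤ 2 * R + m}.encard ≤
      ENNReal.ofReal ((6 * c + 1) ^ Fintype.card ι) *
        if M / 4 ≤ R then ENNReal.ofReal R ^ Fintype.card ι else 0 := by
  split_ifs with hMR
  · have hR1 : 1 ≤ R := by linarith
    calc _ ≤ ({x : ι → ℤ | ‖g (WithLp.toLp 2 fun i => (x i : ℝ))‖ ≤ 3 * R}.encard : ℝ≥0∞) :=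
          ENat.toENNReal_le.2 <| encard_le_encard fun x hx => hx.2.trans (by linarith)
      _ ≤ ENNReal.ofReal ((2 * (c * (3 * R)) + 1) ^ Fintype.card ι) :=
          encard_setOf_norm_le_le hc hg (by positivity)
      _ ≤ ENNReal.ofReal (((6 * c + 1) * R) ^ Fintype.card ι) := by
          gcongr; nlinarith
      _ = _ := by rw [mul_pow, ENNReal.ofReal_mul (by positivity), ENNReal.ofReal_pow hR]
  · rw [mul_zero, nonpos_iff_eq_zero, ← ENat.toENNReal_zero, ENat.toENNReal_inj, encard_eq_zero,
      eq_empty_iff_forall_notMem]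
    rintro x ⟨hMx, hxR⟩
    exact hMR (by linarith)

end LatticeCount

theorem remainder_estimate_for_reduced_moment_measure_general
    (d : ℕ)
    (T : EuclideanSpace ℝ (Fin d) ≃ₗ[ℝ] EuclideanSpace ℝ (Fin d)) :
    ∃ C : ℝ, 0 < C ∧
      ∀ (m : ℝ), 1 ≤ m →
      ∀ f : EuclideanSpace ℝ (Fin d) → ℝ, Continuous f →
        (∀ t, t ∉ closedBall (0 : EuclideanSpace ℝ (Fin d)) m → f t = 0) →
      ∀ (M : ℝ), 10 * m ≤ M →
      ∀ (Ω : Type) (_ : MeasureSpace Ω), IsProbabilityMeasure (ℙ : Measure Ω) →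
      ∀ p : (Fin d → ℤ) → Ω → EuclideanSpace ℝ (Fin d), (∀ x, Measurable (p x)) →
        (∀ z : Fin d → ℤ,
          Measure.map (fun ω => fun x => p (x + z) ω) (ℙ : Measure Ω)
            = Measure.map (fun ω => fun x => p x ω) (ℙ : Measure Ω)) →
        (∫⁻ ω, ∑' x : Fin d → ℤ,
            (if M ≤ ‖T (WithLp.toLp 2 (fun i => (x i : ℝ)) : EuclideanSpace ℝ (Fin d))‖ then
              (‖f (T (WithLp.toLp 2 (fun i => (x i : ℝ)) : EuclideanSpace ℝ (Fin d)) + p x ω - p 0 ω)‖₊ : ℝ≥0∞)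
             else 0) ∂ℙ)
          ≤ ENNReal.ofReal C * (⨆ t, (‖f t‖₊ : ℝ≥0∞)) *
              ∫⁻ ω, (if M / 4 ≤ ‖p 0 ω‖ then (‖p 0 ω‖₊ : ℝ≥0∞) ^ d else 0) ∂ℙ := by
  set Tinv := LinearMap.toContinuousLinearMap
    (T.symm : EuclideanSpace ℝ (Fin d) →ₗ[ℝ] EuclideanSpace ℝ (Fin d))
  have hTinv (v : EuclideanSpace ℝ (Fin d)) : ‖v‖ ≤ ‖Tinv‖ * ‖T v‖ := by
    simpa [Tinv] using Tinv.le_opNorm (T v)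
  refine ⟨2 * (6 * ‖Tinv‖ + 1) ^ d, by positivity, ?_⟩
  intro m hm f hf hsupp M hM Ω _ _ p hp hshift
  simp_rw [← enorm_eq_nnnorm]
  calc _ ≤ _ := lintegral_tsum_enorm_apply_add_sub_le hp hshift hf.measurable hsupp
          (fun x => T (WithLp.toLp 2 fun i => (x i : ℝ))) M
    _ ≤ 2 * (⨆ t, ‖f t‖ₑ) * ∫⁻ ω, ENNReal.ofReal ((6 * ‖Tinv‖ + 1) ^ d) *
          (if M / 4 ≤ ‖p 0 ω‖ then ‖p 0 ω‖ₑ ^ d else 0) := by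
        gcongr with ω
        simpa [ofReal_norm] using
          encard_setOf_norm_mem_Icc_le (norm_nonneg _) hTinv hm hM (norm_nonneg (p 0 ω))
    _ = _ := by
        rw [lintegral_const_mul' _ _ ENNReal.ofReal_ne_top, ENNReal.ofReal_mul zero_le_two,
          ENNReal.ofReal_ofNat]
        ring

/-- Remainder estimate: there is a constant `C > 0` depending only on `d` and
the lattice `T(ℤ^d)` such that for every `m ≥ 1`, every continuous `f` supported in `B_m`,
every `M ≥ 10 m` and every ℤ^d-invariant family of perturbations,
`E[ ∑_{|Tx| ≥ M} |f(Tx + p_x − p_0)| ] ≤ C ⋅ sup|f| ⋅ E[|p_0|^d 1{|p_0| ≥ M/4}]`. -/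
theorem remainder_estimate_for_reduced_moment_measure
    (d : ℕ) (hd : 1 ≤ d)
    (T : EuclideanSpace ℝ (Fin d) ≃ₗ[ℝ] EuclideanSpace ℝ (Fin d))
    (hT : |LinearMap.det (T : EuclideanSpace ℝ (Fin d) →ₗ[ℝ] EuclideanSpace ℝ (Fin d))| = 1) :
    ∃ C : ℝ, 0 < C ∧
      ∀ (m : ℝ), 1 ≤ m →
      ∀ f : EuclideanSpace ℝ (Fin d) → ℝ, Continuous f →
        (∀ t, t ∉ closedBall (0 : EuclideanSpace ℝ (Fin d)) m → f t = 0) →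
      ∀ (M : ℝ), 10 * m ≤ M →
      ∀ (Ω : Type) (_ : MeasureSpace Ω), IsProbabilityMeasure (ℙ : Measure Ω) →
      ∀ p : (Fin d → ℤ) → Ω → EuclideanSpace ℝ (Fin d), (∀ x, Measurable (p x)) →
        (∀ z : Fin d → ℤ,
          Measure.map (fun ω => fun x => p (x + z) ω) (ℙ : Measure Ω)
            = Measure.map (fun ω => fun x => p x ω) (ℙ : Measure Ω)) →
        (∫⁻ ω, ∑' x : Fin d → ℤ,
            (if M ≤ ‖T (WithLp.toLp 2 (fun i => (x i : ℝ)) : EuclideanSpace ℝ (Fin d))‖ then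
              (‖f (T (WithLp.toLp 2 (fun i => (x i : ℝ)) : EuclideanSpace ℝ (Fin d)) + p x ω - p 0 ω)‖₊ : ℝ≥0∞)
             else 0) ∂ℙ)
          ≤ ENNReal.ofReal C * (⨆ t, (‖f t‖₊ : ℝ≥0∞)) *
              ∫⁻ ω, (if M / 4 ≤ ‖p 0 ω‖ then (‖p 0 ω‖₊ : ℝ≥0∞) ^ d else 0) ∂ℙ :=
  remainder_estimate_for_reduced_moment_measure_general d T
end

section
/- Let ρ be a finite Borel measure on ℝ². Then the series ∑_{n=0}^∞ ( 2^{−n} · ∫_{{ω : 2^{−n} ≤ |ω| ≤ 1}} |ω|^{−1} dρ(ω) + 4^{n} · ∫_{{ω : |ω| ≤ 2^{−n}}} |ω|² dρ(ω) ) converges (is finite). -/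
/-!
Swap sum and integrals (Tonelli). At a point with `‖ω‖ = r`, the weights `2⁻ⁿ r⁻¹` over the `n`
with `2⁻ⁿ ≤ r` are at most `1` and decrease geometrically, so they sum to at most `∑ 2⁻ᵏ`; the
weights `4ⁿ r²` over the `n` with `r ≤ 2⁻ⁿ` are at most `1` and increase geometrically, so read
from the largest one down they sum to at most `∑ 4⁻ᵏ`. The integrand of the swapped series is
therefore bounded, and `ρ` is finite.
-/

open MeasureTheory Set
open scoped ENNReal

theorem tsum_indicator_le_tsum_geometric_of_injOn {S : Set ℕ} {a : ℕ → ℝ≥0∞} {q : ℝ≥0∞}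
    (d : ℕ → ℕ) (hd : InjOn d S) (ha : ∀ n ∈ S, a n ≤ q ^ d n) :
    ∑' n, S.indicator a n ≤ ∑' k, q ^ k :=
  calc ∑' n, S.indicator a n = ∑' n : S, a n := (tsum_subtype S a).symm
    _ ≤ ∑' n : S, q ^ d n := ENNReal.tsum_le_tsum fun n => ha n n.2
    _ ≤ ∑' k, q ^ k := ENNReal.tsum_comp_le_tsum_of_injective hd.injective (q ^ ·)

theorem tsum_indicator_pow_mul_le_tsum_geometric (S : Set ℕ) (q c : ℝ≥0∞)
    (h : ∀ n ∈ S, q ^ n * c ≤ 1) :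
    ∑' n, S.indicator (fun n => q ^ n * c) n ≤ ∑' k, q ^ k := by
  rcases S.eq_empty_or_nonempty with rfl | hS
  · simp
  have hmin : ∀ n ∈ S, sInf S ≤ n := fun n hn => Nat.sInf_le hn
  refine tsum_indicator_le_tsum_geometric_of_injOn (· - sInf S)
    (fun m hm n hn hmn => by have := hmin m hm; have := hmin n hn; simp only at hmn; omega)
    fun n hn => ?_
  calc q ^ n * c = q ^ (n - sInf S) * (q ^ sInf S * c) := by
        rw [← mul_assoc, ← pow_add, Nat.sub_add_cancel (hmin n hn)]
    _ ≤ q ^ (n - sInf S) * 1 := by gcongr; exact h _ (Nat.sInf_mem hS)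
    _ = q ^ (n - sInf S) := mul_one _

theorem tsum_indicator_pow_mul_le_tsum_inv_geometric_of_bddAbove (S : Set ℕ) (hS : BddAbove S)
    {p : ℝ≥0∞} (hp₀ : p ≠ 0) (hp : p ≠ ⊤) (c : ℝ≥0∞) (h : ∀ n ∈ S, p ^ n * c ≤ 1) :
    ∑' n, S.indicator (fun n => p ^ n * c) n ≤ ∑' k, p⁻¹ ^ k := by
  rcases S.eq_empty_or_nonempty with rfl | hne
  · simp
  have hmax : ∀ n ∈ S, n ≤ sSup S := fun n hn => le_csSup hS hn
  refine tsum_indicator_le_tsum_geometric_of_injOn (sSup S - ·)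
    (fun m hm n hn hmn => by have := hmax m hm; have := hmax n hn; simp only at hmn; omega)
    fun n hn => ?_
  obtain ⟨k, hk⟩ := Nat.exists_eq_add_of_le (hmax n hn)
  have hcancel : p⁻¹ ^ k * p ^ k = 1 := by
    rw [← mul_pow, ENNReal.inv_mul_cancel hp₀ hp, one_pow]
  calc p ^ n * c = p⁻¹ ^ k * p ^ k * (p ^ n * c) := by rw [hcancel, one_mul]
    _ = p⁻¹ ^ (sSup S - n) * (p ^ sSup S * c) := by rw [hk, Nat.add_sub_cancel_left]; ring
    _ ≤ p⁻¹ ^ (sSup S - n) * 1 := by gcongr; exact h _ (Nat.sSup_mem hne hS)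
    _ = p⁻¹ ^ (sSup S - n) := mul_one _

theorem ENNReal.ofReal_two_zpow_neg_natCast (n : ℕ) :
    ENNReal.ofReal ((2:ℝ) ^ (-(n:ℤ))) = 2⁻¹ ^ n := by
  rw [zpow_neg, zpow_natCast, ENNReal.ofReal_inv_of_pos (by positivity),
    ENNReal.ofReal_pow zero_le_two, ENNReal.ofReal_ofNat, ENNReal.inv_pow]

theorem tsum_indicator_two_inv_pow_mul_ofReal_inv_le {S : Set ℕ} (r : ℝ)
    (hS : ∀ n ∈ S, (2:ℝ) ^ (-(n:ℤ)) ≤ r) :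
    ∑' n, S.indicator (fun n => (2:ℝ≥0∞)⁻¹ ^ n * ENNReal.ofReal r⁻¹) n ≤
      ∑' k, (2:ℝ≥0∞)⁻¹ ^ k := by
  refine tsum_indicator_pow_mul_le_tsum_geometric _ _ _ fun n hnS => ?_
  have hn := hS n hnS
  have hr : 0 < r := lt_of_lt_of_le (by positivity) hn
  rw [← ENNReal.ofReal_two_zpow_neg_natCast, ← ENNReal.ofReal_mul (by positivity),
    ENNReal.ofReal_le_one, ← div_eq_mul_inv]
  exact (div_le_one hr).2 hn

theorem tsum_indicator_four_pow_mul_ofReal_sq_le {r : ℝ} (hr : 0 ≤ r) :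
    ∑' n, {n : ℕ | r ≤ (2:ℝ) ^ (-(n:ℤ))}.indicator
      (fun n => (4:ℝ≥0∞) ^ n * ENNReal.ofReal (r ^ 2)) n ≤ ∑' k, (4:ℝ≥0∞)⁻¹ ^ k := by
  rcases hr.eq_or_lt with rfl | hr
  · simp
  have hbdd : BddAbove {n : ℕ | r ≤ (2:ℝ) ^ (-(n:ℤ))} := by
    obtain ⟨N, hN⟩ := exists_pow_lt_of_lt_one hr (by norm_num : (2⁻¹:ℝ) < 1)
    refine ⟨N, fun n (hn : r ≤ _) => ?_⟩
    rw [inv_pow, ← zpow_natCast, ← zpow_neg] at hN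
    have := (zpow_lt_zpow_iff_right₀ one_lt_two).1 (hN.trans_le hn)
    omega
  refine tsum_indicator_pow_mul_le_tsum_inv_geometric_of_bddAbove _ hbdd (by norm_num)
    (by norm_num) _ fun n (hn : r ≤ _) => ?_
  have hsq : (4:ℝ) ^ n * r ^ 2 ≤ 1 := by
    calc (4:ℝ) ^ n * r ^ 2 ≤ 4 ^ n * ((2:ℝ) ^ (-(n:ℤ))) ^ 2 := by gcongr
      _ = 1 := by
        rw [zpow_neg, zpow_natCast, inv_pow, ← pow_mul, show (4:ℝ) = 2 ^ 2 by norm_num,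
          ← pow_mul, mul_comm 2 n, mul_inv_cancel₀ (by positivity)]
  rw [← ENNReal.ofReal_ofNat 4, ← ENNReal.ofReal_pow (by norm_num),
    ← ENNReal.ofReal_mul (by positivity), ENNReal.ofReal_le_one]
  exact hsq

theorem tsum_mul_setLIntegral_le_mul_measure_univ {α ι : Type*} [MeasurableSpace α]
    [Countable ι] (μ : Measure α) {c : ι → ℝ≥0∞} {s : ι → Set α} {f : ι → α → ℝ≥0∞}
    (hs : ∀ i, MeasurableSet (s i)) (hf : ∀ i, Measurable (f i)) {C : ℝ≥0∞}
    (hC : ∀ x, ∑' i, (s i).indicator (fun x => c i * f i x) x ≤ C) :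
    ∑' i, c i * ∫⁻ x in s i, f i x ∂μ ≤ C * μ univ :=
  calc ∑' i, c i * ∫⁻ x in s i, f i x ∂μ
      = ∫⁻ x, ∑' i, (s i).indicator (fun x => c i * f i x) x ∂μ := by
        simp_rw [← lintegral_const_mul _ (hf _), ← lintegral_indicator (hs _)]
        exact (lintegral_tsum fun i => (((hf i).const_mul _).indicator (hs i)).aemeasurable).symm
    _ ≤ ∫⁻ _, C ∂μ := lintegral_mono hC
    _ = C * μ univ := lintegral_const C

/-- For any finite Borel measure `ρ` on ℝ², the series
`∑ₙ ( 2^{−n} ∫_{2^{−n} ≤ |ω| ≤ 1} |ω|⁻¹ dρ + 4ⁿ ∫_{|ω| ≤ 2^{−n}} |ω|² dρ )` is finite. -/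
theorem dyadic_series_of_finite_measure_converges
    (ρ : Measure (EuclideanSpace ℝ (Fin 2))) [IsFiniteMeasure ρ] :
    (∑' n : ℕ,
      ((2 : ℝ≥0∞)⁻¹ ^ n *
          ∫⁻ ω in {ω : EuclideanSpace ℝ (Fin 2) | (2:ℝ) ^ (-(n:ℤ)) ≤ ‖ω‖ ∧ ‖ω‖ ≤ 1},
            ENNReal.ofReal (‖ω‖⁻¹) ∂ρ
        + (4 : ℝ≥0∞) ^ n *
          ∫⁻ ω in {ω : EuclideanSpace ℝ (Fin 2) | ‖ω‖ ≤ (2:ℝ) ^ (-(n:ℤ))},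
            ENNReal.ofReal (‖ω‖ ^ 2) ∂ρ)) < ⊤ := by
  have hfin {q : ℝ≥0∞} (hq : 1 < q) : (∑' k, q⁻¹ ^ k) * ρ univ < ⊤ :=
    ENNReal.mul_lt_top (tsum_geometric_lt_top.2 (ENNReal.inv_lt_one.2 hq))
      (measure_lt_top ρ univ)
  rw [ENNReal.tsum_add]
  refine ENNReal.add_lt_top.2 ⟨?_, ?_⟩
  · refine (tsum_mul_setLIntegral_le_mul_measure_univ ρ ?_ (fun _ => by fun_prop)
      fun ω => ?_).trans_lt (hfin (q := 2) (by norm_num))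
    · exact fun _ => measurable_norm measurableSet_Icc
    · simpa only [indicator_apply, mem_ofPred_eq]
        using tsum_indicator_two_inv_pow_mul_ofReal_inv_le
          (S := {n : ℕ | (2:ℝ) ^ (-(n:ℤ)) ≤ ‖ω‖ ∧ ‖ω‖ ≤ 1}) ‖ω‖ fun _ hn => hn.1
  · refine (tsum_mul_setLIntegral_le_mul_measure_univ ρ ?_ (fun _ => by fun_prop)
      fun ω => ?_).trans_lt (hfin (q := 4) (by norm_num))
    · exact fun _ => measurable_norm measurableSet_Iic
    · simpa only [indicator_apply, mem_ofPred_eq]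
        using tsum_indicator_four_pow_mul_ofReal_sq_le (norm_nonneg ω)
end

section
/- Let (p_x)_{x∈ℤ} be a ℤ-invariant family of real random variables with E[|p_0|] < ∞, and let U be uniformly distributed on [0,1) and independent of (p_x). Then the one-dimensional perturbed lattice is hyperuniform: Var[N_r] / (2r) → 0 as r → ∞, where N_r := ∑_{x∈ℤ} 1{ |x + p_x + U| ≤ r }. -/
open MeasureTheory ProbabilityTheory Filter Set
open scoped ENNReal symmDiff Topology

/-!
Shifting the lattice by `u ∈ [0, 1)` alone puts `2r ± 1` points into `[-r, r]`, so
`|N_r - 2r| ≤ 1 + T_r`, where `T_r` counts the points `x` whose perturbation is large enough to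
carry `x` across the boundary, i.e. `|p_x| ≳ ||x| - r|`; hence `Var N_r ≤ 2 + 2 E[T_r²]`.
Ordering the crossing points by their distance to the boundary bounds `E[T_r²]` by twice
`∑_y #{x : ||x| - r| ≤ ||y| - r|} P(p_y crosses)`, and by stationarity `p_y` may be replaced by
`p_0` there. A fixed value `t` of `p_0` makes `O(min(|t|, r))` points cross, each of weight
`O(|t|)`, so `E[T_r²] = O(E[|p_0| min(|p_0|, r)])`, which is `o(r)` by dominated convergence
since `E|p_0| < ∞`.
-/

lemma ENNReal.tsum_indicator_one_eq_encard {ι : Type*} (S : Set ι) :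
    ∑' i, S.indicator (1 : ι → ℝ≥0∞) i = S.encard := by
  rw [← ENNReal.tsum_set_one, tsum_subtype S fun _ => (1 : ℝ≥0∞)]
  rfl

lemma ENNReal.tsum_ite_one_eq_encard {ι : Type*} (P : ι → Prop) [DecidablePred P] :
    ∑' i, (if P i then (1 : ℝ≥0∞) else 0) = {i | P i}.encard := by
  rw [← ENNReal.tsum_indicator_one_eq_encard]
  congr! with i
  simp [indicator_apply]

lemma Set.toReal_encard {α : Type*} (s : Set α) : (s.encard : ℝ≥0∞).toReal = s.ncard := by
  rcases s.finite_or_infinite with hs | hs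
  · rw [← hs.cast_ncard_eq]; simp
  · simp [hs.encard_eq, hs.ncard]

lemma tsum_ite_one_eq_ncard {ι : Type*} (P : ι → Prop) [DecidablePred P] :
    ∑' i, (if P i then (1 : ℝ) else 0) = {i | P i}.ncard := by
  rw [← toReal_encard, ← ENNReal.tsum_ite_one_eq_encard,
    ENNReal.tsum_toReal_eq fun i => by split_ifs <;> simp]
  congr! with i
  split_ifs <;> simp

lemma ENNReal.add_sq_le (a b : ℝ≥0∞) : (a + b) ^ 2 ≤ 2 * a ^ 2 + 2 * b ^ 2 := by
  have := ENNReal.rpow_add_le_mul_rpow_add_rpow a b one_le_two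
  simp only [ENNReal.rpow_two, show (2 : ℝ) - 1 = 1 by norm_num, ENNReal.rpow_one] at this
  rwa [mul_add] at this

lemma Set.abs_ncard_sub_ncard_le_of_symmDiff_subset {α : Type*} {A B C : Set α} (hB : B.Finite)
    (hC : C.Finite) (h : A ∆ B ⊆ C) : |(A.ncard : ℝ) - B.ncard| ≤ C.ncard := by
  have hAB : A ⊆ C ∪ B := (le_symmDiff_sup_right A B).trans (union_subset_union_left B h)
  have hBA : B ⊆ C ∪ A := (le_symmDiff_sup_left A B).trans (union_subset_union_left A h)
  have hA : A.Finite := (hC.union hB).subset hAB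
  have h₁ : (A.ncard : ℝ) ≤ C.ncard + B.ncard := by
    exact_mod_cast (ncard_le_ncard hAB (hC.union hB)).trans (ncard_union_le _ _)
  have h₂ : (B.ncard : ℝ) ≤ C.ncard + A.ncard := by
    exact_mod_cast (ncard_le_ncard hBA (hC.union hA)).trans (ncard_union_le _ _)
  exact abs_sub_le_iff.2 ⟨by linarith, by linarith⟩

lemma Int.abs_ncard_preimage_Icc_sub_le {a b : ℝ} (hab : a ≤ b) :
    |((Int.cast ⁻¹' Icc a b : Set ℤ).ncard : ℝ) - (b - a)| ≤ 1 := by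
  have ha := Int.le_ceil a
  have ha' := Int.ceil_lt_add_one a
  have hb := Int.floor_le b
  have hb' := Int.lt_floor_add_one b
  have hle : ⌈a⌉ ≤ ⌊b⌋ + 1 := by
    rw [← Int.lt_add_one_iff, ← Int.cast_lt (R := ℝ)]; push_cast; linarith
  have hcard : ((Finset.Icc ⌈a⌉ ⌊b⌋).card : ℝ) = ⌊b⌋ + 1 - ⌈a⌉ := by
    exact_mod_cast Int.card_Icc_of_le _ _ hle
  rw [Int.preimage_Icc, ← Finset.coe_Icc, ncard_coe_finset, hcard, abs_le]
  constructor <;> linarith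

lemma Int.encard_preimage_Icc_le {a b : ℝ} (hab : a ≤ b) :
    ((Int.cast ⁻¹' Icc a b : Set ℤ).encard : ℝ≥0∞) ≤ ENNReal.ofReal (b - a + 1) := by
  have hfin : (Int.cast ⁻¹' Icc a b : Set ℤ).Finite := by
    rw [Int.preimage_Icc]; exact finite_Icc _ _
  have := abs_le.1 (Int.abs_ncard_preimage_Icc_sub_le hab)
  rw [← hfin.cast_ncard_eq, ENat.toENNReal_coe, ← ENNReal.ofReal_natCast]
  exact ENNReal.ofReal_le_ofReal (by linarith)

lemma encard_sq_le_two_mul_tsum {ι α : Type*} [LinearOrder α] (d : ι → α) (S : Set ι) :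
    (S.encard : ℝ≥0∞) ^ 2 ≤ 2 * ∑' j, S.indicator 1 j * ({i | d i ≤ d j}.encard : ℝ≥0∞) := by
  set f : ι → ℝ≥0∞ := S.indicator 1
  have hf : ∀ k, f k ≤ 1 := fun k => indicator_apply_le' (fun _ => le_rfl) (fun _ => zero_le)
  -- every pair `(i, j)` is counted by whichever of `i`, `j` is larger for `d`
  have hpair : ∀ i j,
      f i * f j ≤ (if d i ≤ d j then f j else 0) + (if d j ≤ d i then f i else 0) := by
    intro i j
    rcases le_total (d i) (d j) with h | h
    · rw [if_pos h]
      exact (mul_le_of_le_one_left' (hf i)).trans le_self_add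
    · rw [if_pos h]
      exact (mul_le_of_le_one_right' (hf j)).trans le_add_self
  have hcount : ∀ j, ∑' i, (if d i ≤ d j then f j else 0) = f j * {i | d i ≤ d j}.encard := by
    intro j
    rw [← ENNReal.tsum_ite_one_eq_encard, ← ENNReal.tsum_mul_left]
    simp_rw [mul_ite, mul_one, mul_zero]
  calc (S.encard : ℝ≥0∞) ^ 2 = ∑' i, ∑' j, f i * f j := by
        rw [← ENNReal.tsum_indicator_one_eq_encard, sq, ← ENNReal.tsum_mul_right]
        simp_rw [ENNReal.tsum_mul_left]
        rfl
    _ ≤ ∑' i, ∑' j, ((if d i ≤ d j then f j else 0) + (if d j ≤ d i then f i else 0)) :=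
        ENNReal.tsum_le_tsum fun i => ENNReal.tsum_le_tsum fun j => hpair i j
    _ = ∑' j, ∑' i, (if d i ≤ d j then f j else 0)
          + ∑' i, ∑' j, (if d j ≤ d i then f i else 0) := by
        simp_rw [ENNReal.tsum_add]
        rw [ENNReal.tsum_comm (f := fun i j => if d i ≤ d j then f j else 0)]
    _ = 2 * ∑' j, f j * {i | d i ≤ d j}.encard := by
        simp_rw [hcount, two_mul]

section Measure

variable {Ω : Type*} [MeasurableSpace Ω] {μ : Measure Ω}

lemma lintegral_encard_sq_le {ι α : Type*} [Countable ι] [LinearOrder α] {A : ι → Set Ω}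
    (hA : ∀ i, MeasurableSet (A i)) (d : ι → α) :
    ∫⁻ ω, ({i | ω ∈ A i}.encard : ℝ≥0∞) ^ 2 ∂μ
      ≤ 2 * ∑' j, ({i | d i ≤ d j}.encard : ℝ≥0∞) * μ (A j) := by
  have hm : ∀ j, Measurable fun ω => (A j).indicator 1 ω * ({i | d i ≤ d j}.encard : ℝ≥0∞) :=
    fun j => (measurable_one.indicator (hA j)).mul_const _
  calc ∫⁻ ω, ({i | ω ∈ A i}.encard : ℝ≥0∞) ^ 2 ∂μ
      ≤ ∫⁻ ω, 2 * ∑' j, (A j).indicator 1 ω * ({i | d i ≤ d j}.encard : ℝ≥0∞) ∂μ :=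
        lintegral_mono fun ω => encard_sq_le_two_mul_tsum d _
    _ = 2 * ∑' j, ({i | d i ≤ d j}.encard : ℝ≥0∞) * μ (A j) := by
        rw [lintegral_const_mul _ (Measurable.tsum hm),
          lintegral_tsum fun j => (hm j).aemeasurable]
        refine congrArg _ (tsum_congr fun j => ?_)
        rw [lintegral_mul_const _ (measurable_one.indicator (hA j)),
          lintegral_indicator_one (hA j), mul_comm]

lemma identDistrib_of_map_shift_eq {ι E : Type*} [AddZeroClass ι] [MeasurableSpace E]
    {p : ι → Ω → E} (hpm : ∀ x, Measurable (p x))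
    (hinv : ∀ z, μ.map (fun ω x => p (x + z) ω) = μ.map (fun ω x => p x ω)) (z : ι) :
    IdentDistrib (p z) (p 0) μ μ := by
  have h : IdentDistrib (fun ω x => p (x + z) ω) (fun ω x => p x ω) μ μ :=
    ⟨(measurable_pi_lambda _ fun x => hpm (x + z)).aemeasurable,
      (measurable_pi_lambda _ hpm).aemeasurable, hinv z⟩
  simpa [Function.comp_def] using h.comp (measurable_pi_apply 0)

lemma evariance_le_lintegral_enorm_sub_sq [IsProbabilityMeasure μ] {X : Ω → ℝ}
    (hX : AEStronglyMeasurable X μ) (c : ℝ) :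
    evariance X μ ≤ ∫⁻ ω, ‖X ω - c‖ₑ ^ 2 ∂μ := by
  have hXc : AEStronglyMeasurable (fun ω => X ω - c) μ := hX.sub aestronglyMeasurable_const
  have hshift : evariance (fun ω => X ω - c) μ = evariance X μ := by
    by_cases hL : MemLp X 2 μ
    · have hL' : MemLp (fun ω => X ω - c) 2 μ := hL.sub (memLp_const c)
      rw [← ofReal_variance hL, ← ofReal_variance hL', variance_sub_const hX]
    · have hL' : ¬ MemLp (fun ω => X ω - c) 2 μ := fun h =>
        hL (by convert h.add (memLp_const c) using 1; ext ω; simp)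
      rw [evariance_eq_top hX hL, evariance_eq_top hXc hL']
  rw [← hshift, evariance_def' hXc]
  exact tsub_le_self

end Measure

namespace PerturbedLattice

def boundaryDist (r : ℝ) (x : ℤ) : ℝ := |(|(x : ℝ)| - r)|

lemma encard_setOf_boundaryDist_le (a : ℝ) {s : ℝ} (hs : 0 ≤ s) :
    ({y : ℤ | boundaryDist a y ≤ s}.encard : ℝ≥0∞) ≤ ENNReal.ofReal (4 * s + 2) := by
  set I : Set ℤ := Int.cast ⁻¹' Icc (a - s) (a + s)
  have hsub : {y : ℤ | boundaryDist a y ≤ s} ⊆ I ∪ Neg.neg ⁻¹' I := by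
    intro y hy
    simp only [boundaryDist, mem_ofPred_eq, abs_le] at hy
    rcases abs_cases (y : ℝ) with ⟨hy', _⟩ | ⟨hy', _⟩
    · left; simp only [I, mem_preimage, mem_Icc]; constructor <;> linarith
    · right; simp only [I, mem_preimage, mem_Icc, Int.cast_neg]; constructor <;> linarith
  have hneg : (Neg.neg ⁻¹' I).encard = I.encard :=
    encard_preimage_of_injective_subset_range neg_injective (by simp)
  have hI := Int.encard_preimage_Icc_le (show a - s ≤ a + s by linarith)
  calc ({y : ℤ | boundaryDist a y ≤ s}.encard : ℝ≥0∞)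
      ≤ ((I ∪ Neg.neg ⁻¹' I).encard : ℝ≥0∞) := by gcongr
    _ ≤ I.encard + (Neg.neg ⁻¹' I).encard := by exact_mod_cast encard_union_le _ _
    _ = I.encard + I.encard := by rw [hneg]
    _ ≤ ENNReal.ofReal (2 * s + 1) + ENNReal.ofReal (2 * s + 1) := by
      gcongr <;> exact hI.trans_eq (by ring_nf)
    _ = ENNReal.ofReal (4 * s + 2) := by
      rw [← ENNReal.ofReal_add (by positivity) (by positivity)]; ring_nf

/-- The perturbations `t` that can move the lattice point `x`, shifted by some `u ∈ [0, 1)`, into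
or out of `[-r, r]`. The second condition keeps the number of far points that one large `t` can
bring inside of order `r` rather than `|t|`. -/
def crossingSet (r : ℝ) (x : ℤ) : Set ℝ :=
  {t | boundaryDist r x ≤ |t| + 1 ∧ (r + 1 < |(x : ℝ)| → |t| ≤ |(x : ℝ)| + r + 1)}

lemma measurableSet_crossingSet (r : ℝ) (x : ℤ) : MeasurableSet (crossingSet r x) := by
  unfold crossingSet
  measurability

lemma symmDiff_subset_crossingSet (r : ℝ) (pp : ℤ → ℝ) {u : ℝ} (hu : u ∈ Ico (0 : ℝ) 1) :
    {x : ℤ | |(x : ℝ) + pp x + u| ≤ r} ∆ {x : ℤ | |(x : ℝ) + u| ≤ r}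
      ⊆ {x | pp x ∈ crossingSet r x} := by
  intro x hx
  have hu' : |u| = u := abs_of_nonneg hu.1
  have h₁ : |(x : ℝ) + u| ≤ |(x : ℝ)| + u := (abs_add_le (x : ℝ) u).trans_eq (by rw [hu'])
  have h₂ : |(x : ℝ)| ≤ |(x : ℝ) + u| + u := by
    simpa [hu'] using abs_add_le ((x : ℝ) + u) (-u)
  have h₃ : |(x : ℝ) + pp x + u| ≤ |(x : ℝ) + u| + |pp x| := by
    simpa [add_right_comm] using abs_add_le ((x : ℝ) + u) (pp x)
  have h₄ : |(x : ℝ) + u| ≤ |(x : ℝ) + pp x + u| + |pp x| := by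
    simpa [add_right_comm] using abs_add_le ((x : ℝ) + pp x + u) (-pp x)
  have h₅ : |pp x| ≤ |(x : ℝ) + pp x + u| + |(x : ℝ) + u| := by
    simpa using abs_sub ((x : ℝ) + pp x + u) ((x : ℝ) + u)
  have hu1 := hu.2
  simp only [crossingSet, boundaryDist, mem_ofPred_eq]
  rcases hx with ⟨hin, hout⟩ | ⟨hin, hout⟩ <;>
    simp only [mem_ofPred_eq, not_le] at hin hout <;>
    exact ⟨abs_le.2 ⟨by linarith, by linarith⟩, fun hfar => by linarith⟩

/-- `N_r` for the perturbations `pp` and the shift `u`. -/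
noncomputable def pointCount (r : ℝ) (pp : ℤ → ℝ) (u : ℝ) : ℝ :=
  ∑' x : ℤ, if |(x : ℝ) + pp x + u| ≤ r then 1 else 0

lemma enorm_pointCount_sub_le {r : ℝ} (hr : 0 ≤ r) (pp : ℤ → ℝ) {u : ℝ}
    (hu : u ∈ Ico (0 : ℝ) 1) :
    ‖pointCount r pp u - 2 * r‖ₑ ≤ 1 + {x | pp x ∈ crossingSet r x}.encard := by
  set C := {x | pp x ∈ crossingSet r x}
  rcases C.finite_or_infinite with hC | hC
  swap
  · simp [hC.encard_eq]
  have hB : {x : ℤ | |(x : ℝ) + u| ≤ r} = Int.cast ⁻¹' Icc (-r - u) (r - u) := by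
    ext x
    simp only [mem_ofPred_eq, mem_preimage, mem_Icc, abs_le]
    constructor <;> rintro ⟨h₁, h₂⟩ <;> constructor <;> linarith
  have hBfin : {x : ℤ | |(x : ℝ) + u| ≤ r}.Finite := by
    rw [hB, Int.preimage_Icc]; exact finite_Icc _ _
  have hcross := abs_ncard_sub_ncard_le_of_symmDiff_subset hBfin hC
    (symmDiff_subset_crossingSet r pp hu)
  have hlattice := Int.abs_ncard_preimage_Icc_sub_le (show -r - u ≤ r - u by linarith)
  rw [← hB, show r - u - (-r - u) = 2 * r by ring] at hlattice
  rw [pointCount, tsum_ite_one_eq_ncard, Real.enorm_eq_ofReal_abs, ← hC.cast_ncard_eq]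
  calc ENNReal.ofReal |_ - 2 * r| ≤ ENNReal.ofReal (1 + C.ncard) :=
        ENNReal.ofReal_le_ofReal <| (abs_sub_le _ _ _).trans (by linarith)
    _ = 1 + C.ncard := by simp [ENNReal.ofReal_add]

def crossingMajorant (r t : ℝ) : ℝ := (4 * |t| + 6) * min (4 * |t| + 6) (8 * r + 12)

lemma crossingMajorant_nonneg {r : ℝ} (hr : 0 ≤ r) (t : ℝ) : 0 ≤ crossingMajorant r t := by
  unfold crossingMajorant; positivity

lemma crossingMajorant_div_le {r : ℝ} (hr : 1 ≤ r) (t : ℝ) :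
    (2 + 4 * crossingMajorant r t) / (2 * r) ≤ 1 + 40 * (4 * |t| + 6) := by
  have hΨ : crossingMajorant r t ≤ (4 * |t| + 6) * (8 * r + 12) :=
    mul_le_mul_of_nonneg_left (min_le_right _ _) (by positivity)
  rw [div_le_iff₀ (by positivity)]
  nlinarith [abs_nonneg t]

lemma tendsto_crossingMajorant_div (t : ℝ) :
    Tendsto (fun r => (2 + 4 * crossingMajorant r t) / (2 * r)) atTop (𝓝 0) := by
  have hΨ : ∀ r, crossingMajorant r t ≤ (4 * |t| + 6) ^ 2 := fun r =>
    (mul_le_mul_of_nonneg_left (min_le_left _ _) (by positivity)).trans_eq (sq _).symm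
  have hmaj : Tendsto (fun r : ℝ => (2 + 4 * (4 * |t| + 6) ^ 2) / (2 * r)) atTop (𝓝 0) :=
    tendsto_const_nhds.div_atTop (tendsto_id.const_mul_atTop two_pos)
  refine tendsto_of_tendsto_of_tendsto_of_le_of_le' tendsto_const_nhds hmaj ?_ ?_ <;>
    filter_upwards [eventually_gt_atTop 0] with r hr
  · exact div_nonneg (by linarith [crossingMajorant_nonneg hr.le t]) (by positivity)
  · exact div_le_div_of_nonneg_right (by linarith [hΨ r]) (by positivity)

lemma encard_setOf_mem_crossingSet_le {r : ℝ} (hr : 0 ≤ r) (t : ℝ) :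
    ({y : ℤ | t ∈ crossingSet r y}.encard : ℝ≥0∞)
      ≤ ENNReal.ofReal (min (4 * |t| + 6) (8 * r + 12)) := by
  rw [ENNReal.ofReal_min]
  refine le_min ?_ ?_
  · calc ({y : ℤ | t ∈ crossingSet r y}.encard : ℝ≥0∞)
        ≤ {y : ℤ | boundaryDist r y ≤ |t| + 1}.encard :=
          ENat.toENNReal_le.2 (encard_le_encard fun y hy => hy.1)
      _ ≤ ENNReal.ofReal (4 * (|t| + 1) + 2) := encard_setOf_boundaryDist_le r (by positivity)
      _ = ENNReal.ofReal (4 * |t| + 6) := by ring_nf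
  · have hsub : {y : ℤ | t ∈ crossingSet r y}
        ⊆ {y | boundaryDist 0 y ≤ r + 1} ∪ {y | boundaryDist |t| y ≤ r + 1} := by
      rintro y ⟨hnear, hfar⟩
      simp only [boundaryDist, abs_le] at hnear ⊢
      by_cases hy : r + 1 < |(y : ℝ)|
      · have := hfar hy
        right; constructor <;> linarith
      · left; constructor <;> linarith [abs_nonneg (y : ℝ)]
    calc ({y : ℤ | t ∈ crossingSet r y}.encard : ℝ≥0∞)
        ≤ ({y | boundaryDist 0 y ≤ r + 1} ∪ {y | boundaryDist |t| y ≤ r + 1}).encard := by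
          gcongr
      _ ≤ {y | boundaryDist 0 y ≤ r + 1}.encard + {y | boundaryDist |t| y ≤ r + 1}.encard := by
          exact_mod_cast encard_union_le _ _
      _ ≤ ENNReal.ofReal (4 * (r + 1) + 2) + ENNReal.ofReal (4 * (r + 1) + 2) := by
          gcongr <;> exact encard_setOf_boundaryDist_le _ (by linarith)
      _ = ENNReal.ofReal (8 * r + 12) := by
          rw [← ENNReal.ofReal_add (by linarith) (by linarith)]; ring_nf

lemma tsum_indicator_crossingSet_le {r : ℝ} (hr : 0 ≤ r) (t : ℝ) :
    ∑' y : ℤ, (crossingSet r y).indicator (fun _ => ENNReal.ofReal (4 * boundaryDist r y + 2)) t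
      ≤ ENNReal.ofReal (crossingMajorant r t) := by
  calc ∑' y : ℤ,
        (crossingSet r y).indicator (fun _ => ENNReal.ofReal (4 * boundaryDist r y + 2)) t
      ≤ ∑' y : ℤ, ENNReal.ofReal (4 * |t| + 6) * {y : ℤ | t ∈ crossingSet r y}.indicator 1 y := by
        refine ENNReal.tsum_le_tsum fun y => ?_
        by_cases hy : t ∈ crossingSet r y
        · simpa [hy] using ENNReal.ofReal_le_ofReal (by linarith [hy.1])
        · simp [hy]
    _ ≤ ENNReal.ofReal (4 * |t| + 6) * ENNReal.ofReal (min (4 * |t| + 6) (8 * r + 12)) := by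
        rw [ENNReal.tsum_mul_left, ENNReal.tsum_indicator_one_eq_encard]
        gcongr
        exact encard_setOf_mem_crossingSet_le hr t
    _ = ENNReal.ofReal (crossingMajorant r t) := (ENNReal.ofReal_mul (by positivity)).symm

section Measure

variable {Ω : Type*} [MeasurableSpace Ω] {μ : Measure Ω}

lemma lintegral_encard_crossing_sq_le {p : ℤ → Ω → ℝ} (hpm : ∀ x, Measurable (p x))
    (hmarg : ∀ x, IdentDistrib (p x) (p 0) μ μ) {r : ℝ} (hr : 0 ≤ r) :
    ∫⁻ ω, ({x | p x ω ∈ crossingSet r x}.encard : ℝ≥0∞) ^ 2 ∂μ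
      ≤ 2 * ∫⁻ ω, ENNReal.ofReal (crossingMajorant r (p 0 ω)) ∂μ := by
  have hS := measurableSet_crossingSet r
  have hm : ∀ y, Measurable fun ω =>
      (crossingSet r y).indicator (fun _ => ENNReal.ofReal (4 * boundaryDist r y + 2)) (p 0 ω) :=
    fun y => (measurable_const.indicator (hS y)).comp (hpm 0)
  calc ∫⁻ ω, ({x | p x ω ∈ crossingSet r x}.encard : ℝ≥0∞) ^ 2 ∂μ
      ≤ 2 * ∑' y, ({x | boundaryDist r x ≤ boundaryDist r y}.encard : ℝ≥0∞)
          * μ (p y ⁻¹' crossingSet r y) :=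
        lintegral_encard_sq_le (fun y => hpm y (hS y)) (boundaryDist r)
    _ ≤ 2 * ∑' y, ENNReal.ofReal (4 * boundaryDist r y + 2) * μ (p 0 ⁻¹' crossingSet r y) := by
        simp_rw [fun y => (hmarg y).measure_mem_eq (hS y)]
        gcongr with y
        exact encard_setOf_boundaryDist_le r (abs_nonneg _)
    _ = 2 * ∫⁻ ω, ∑' y, (crossingSet r y).indicator
          (fun _ => ENNReal.ofReal (4 * boundaryDist r y + 2)) (p 0 ω) ∂μ := by
        rw [lintegral_tsum fun y => (hm y).aemeasurable]
        refine congrArg _ (tsum_congr fun y => ?_)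
        rw [lintegral_indicator_const_comp (hpm 0) (hS y)]
    _ ≤ 2 * ∫⁻ ω, ENNReal.ofReal (crossingMajorant r (p 0 ω)) ∂μ := by
        gcongr with ω
        exact tsum_indicator_crossingSet_le hr (p 0 ω)

variable [IsProbabilityMeasure μ]

lemma evariance_pointCount_le {p : ℤ → Ω → ℝ} (hpm : ∀ x, Measurable (p x))
    (hmarg : ∀ x, IdentDistrib (p x) (p 0) μ μ) {U : Ω → ℝ} (hUm : Measurable U)
    (hU : ∀ᵐ ω ∂μ, U ω ∈ Ico (0 : ℝ) 1) {r : ℝ} (hr : 0 ≤ r) :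
    evariance (fun ω => pointCount r (fun x => p x ω) (U ω)) μ
      ≤ 2 + 4 * ∫⁻ ω, ENNReal.ofReal (crossingMajorant r (p 0 ω)) ∂μ := by
  classical
  set T : Ω → ℝ≥0∞ := fun ω => {x : ℤ | p x ω ∈ crossingSet r x}.encard
  have hNm : Measurable fun ω => pointCount r (fun x => p x ω) (U ω) :=
    Measurable.tsum fun x => Measurable.ite (measurableSet_le (by fun_prop) measurable_const)
      measurable_const measurable_const
  have hTm : Measurable T := by
    simp_rw [T, ← ENNReal.tsum_ite_one_eq_encard]
    exact Measurable.tsum fun x => Measurable.ite (hpm x (measurableSet_crossingSet r x))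
      measurable_const measurable_const
  calc _ ≤ ∫⁻ ω, ‖pointCount r (fun x => p x ω) (U ω) - 2 * r‖ₑ ^ 2 ∂μ :=
        evariance_le_lintegral_enorm_sub_sq hNm.aestronglyMeasurable (2 * r)
    _ ≤ ∫⁻ ω, (1 + T ω) ^ 2 ∂μ := lintegral_mono_ae <| hU.mono fun ω hω => by
        gcongr
        exact enorm_pointCount_sub_le hr _ hω
    _ ≤ ∫⁻ ω, (2 + 2 * T ω ^ 2) ∂μ :=
        lintegral_mono fun ω => (ENNReal.add_sq_le _ _).trans_eq (by norm_num)
    _ = 2 + 2 * ∫⁻ ω, T ω ^ 2 ∂μ := by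
        rw [lintegral_add_left measurable_const, lintegral_const, measure_univ, mul_one,
          lintegral_const_mul _ (hTm.pow_const 2)]
    _ ≤ 2 + 2 * (2 * ∫⁻ ω, ENNReal.ofReal (crossingMajorant r (p 0 ω)) ∂μ) := by
        gcongr
        exact lintegral_encard_crossing_sq_le hpm hmarg hr
    _ = 2 + 4 * ∫⁻ ω, ENNReal.ofReal (crossingMajorant r (p 0 ω)) ∂μ := by ring

lemma tendsto_lintegral_crossingMajorant_div {f : Ω → ℝ} (hf : Integrable f μ) :
    Tendsto (fun r => (2 + 4 * ∫⁻ ω, ENNReal.ofReal (crossingMajorant r (f ω)) ∂μ)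
      / ENNReal.ofReal (2 * r)) atTop (𝓝 0) := by
  have heq : ∀ᶠ r in atTop, (2 + 4 * ∫⁻ ω, ENNReal.ofReal (crossingMajorant r (f ω)) ∂μ)
      / ENNReal.ofReal (2 * r)
      = ∫⁻ ω, ENNReal.ofReal ((2 + 4 * crossingMajorant r (f ω)) / (2 * r)) ∂μ := by
    filter_upwards [eventually_gt_atTop 0] with r hr
    have h2r : ENNReal.ofReal (2 * r) ≠ 0 := (ENNReal.ofReal_pos.2 (by linarith)).ne'
    simp_rw [ENNReal.ofReal_div_of_pos (by linarith : 0 < 2 * r), div_eq_mul_inv,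
      ENNReal.ofReal_add zero_le_two (mul_nonneg zero_le_four (crossingMajorant_nonneg hr.le _)),
      ENNReal.ofReal_mul zero_le_four, ENNReal.ofReal_ofNat]
    rw [lintegral_mul_const' _ _ (ENNReal.inv_ne_top.2 h2r), lintegral_add_left measurable_const,
      lintegral_const_mul' _ _ ENNReal.ofNat_ne_top, lintegral_const, measure_univ, mul_one]
  rw [tendsto_congr' heq, ← lintegral_zero]
  refine tendsto_lintegral_filter_of_dominated_convergence'
    (fun ω => ENNReal.ofReal (1 + 40 * (4 * |f ω| + 6))) ?_ ?_ ?_ ?_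
  · have := hf.aemeasurable
    exact Eventually.of_forall fun r => by simp only [crossingMajorant]; fun_prop
  · filter_upwards [eventually_ge_atTop 1] with r hr
    exact ae_of_all _ fun ω => ENNReal.ofReal_le_ofReal (crossingMajorant_div_le hr _)
  · exact ((integrable_const 1).add (((hf.abs.const_mul 4).add
      (integrable_const 6)).const_mul 40)).lintegral_lt_top.ne
  · exact ae_of_all _ fun ω =>
      ENNReal.ofReal_zero ▸ ENNReal.tendsto_ofReal (tendsto_crossingMajorant_div _)

end Measure

end PerturbedLattice

open PerturbedLattice in
theorem perturbed_lattice_dim_one_hyperuniform_of_finite_first_moment_general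
    {Ω : Type} [MeasureSpace Ω] [IsProbabilityMeasure (ℙ : Measure Ω)]
    (p : ℤ → Ω → ℝ)
    (hpm : ∀ x, Measurable (p x))
    (hinv : ∀ z : ℤ,
      Measure.map (fun ω => fun x : ℤ => p (x + z) ω) (ℙ : Measure Ω)
        = Measure.map (fun ω => fun x : ℤ => p x ω) (ℙ : Measure Ω))
    (hmom : Integrable (p 0) (ℙ : Measure Ω))
    (U : Ω → ℝ) (hUm : Measurable U)
    (hU : Measure.map U (ℙ : Measure Ω) = volume.restrict (Set.Ico (0:ℝ) 1)) :
    Tendsto (fun r : ℝ =>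
        evariance (fun ω => ∑' x : ℤ,
            (if |(x : ℝ) + p x ω + U ω| ≤ r then (1 : ℝ) else 0)) (ℙ : Measure Ω)
          / ENNReal.ofReal (2 * r))
      atTop (nhds 0) := by
  have hU01 : ∀ᵐ ω ∂(ℙ : Measure Ω), U ω ∈ Ico (0 : ℝ) 1 :=
    ae_of_ae_map hUm.aemeasurable (hU ▸ ae_restrict_mem measurableSet_Ico)
  refine tendsto_of_tendsto_of_tendsto_of_le_of_le' tendsto_const_nhds
    (tendsto_lintegral_crossingMajorant_div hmom) (Eventually.of_forall fun _ => zero_le) ?_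
  filter_upwards [eventually_ge_atTop 0] with r hr
  gcongr
  exact evariance_pointCount_le hpm (identDistrib_of_map_shift_eq hpm hinv) hUm hU01 hr

/-- In dimension 1, if the ℤ-invariant perturbations have a finite first
moment, then the perturbed lattice is hyperuniform: `Var[N_r]/(2r) → 0` as `r → ∞`. -/
theorem perturbed_lattice_dim_one_hyperuniform_of_finite_first_moment
    {Ω : Type} [MeasureSpace Ω] [IsProbabilityMeasure (ℙ : Measure Ω)]
    (p : ℤ → Ω → ℝ)
    (hpm : ∀ x, Measurable (p x))
    (hinv : ∀ z : ℤ,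
      Measure.map (fun ω => fun x : ℤ => p (x + z) ω) (ℙ : Measure Ω)
        = Measure.map (fun ω => fun x : ℤ => p x ω) (ℙ : Measure Ω))
    (hmom : Integrable (p 0) (ℙ : Measure Ω))
    (U : Ω → ℝ) (hUm : Measurable U)
    (hU : Measure.map U (ℙ : Measure Ω) = volume.restrict (Set.Ico (0:ℝ) 1))
    (hUindep : IndepFun U (fun ω => fun x : ℤ => p x ω) (ℙ : Measure Ω)) :
    Tendsto (fun r : ℝ =>
        evariance (fun ω => ∑' x : ℤ,
            (if |(x : ℝ) + p x ω + U ω| ≤ r then (1 : ℝ) else 0)) (ℙ : Measure Ω)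
          / ENNReal.ofReal (2 * r))
      atTop (nhds 0) :=
  perturbed_lattice_dim_one_hyperuniform_of_finite_first_moment_general p hpm hinv hmom U hUm hU
end

section
/- Let d ≥ 1 (dimension), r > 0, ε ≥ 0, and x, u, τ, C ∈ ℝ^d be such that (9/10)·r ≤ |x + u| ≤ (11/10)·r and |τ − C| ≤ r/10. Then x + u + τ − C ≠ 0 and | x + u + ε·(x + u + τ − C)/|x + u + τ − C| | ≥ |x + u| + ε/3. -/
open scoped RealInnerProductSpace

/-!
Write `y = x + u` and `v = τ - C`, so that `‖v‖ ≤ ‖y‖ / 9`. Already `‖v‖ ≤ ‖y‖ / 2` keeps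
`w = y + v` within a cone of cosine `1/3` around `y`, and moving `y` a distance `ε` in a direction
making cosine at least `c` with `y` lengthens it by at least `c ε`, as the law of cosines shows.
-/

theorem add_ne_zero_of_norm_lt {E : Type*} [SeminormedAddGroup E] {y v : E} (h : ‖v‖ < ‖y‖) :
    y + v ≠ 0 := by
  intro hyv
  rw [add_eq_zero_iff_neg_eq'] at hyv
  rw [← hyv, norm_neg] at h
  exact lt_irrefl _ h

section

variable {E : Type*} [NormedAddCommGroup E] [InnerProductSpace ℝ E]

theorem one_third_mul_norm_mul_norm_add_le_inner_add {y v : E} (h : ‖v‖ ≤ ‖y‖ / 2) :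
    1 / 3 * (‖y‖ * ‖y + v‖) ≤ ⟪y, y + v⟫ := by
  have hw : ‖y + v‖ ≤ ‖y‖ + ‖v‖ := norm_add_le y v
  have hyv : -(‖y‖ * ‖v‖) ≤ ⟪y, v⟫ := neg_le_of_abs_le (abs_real_inner_le_norm y v)
  rw [inner_add_right, real_inner_self_eq_norm_sq]
  nlinarith [norm_nonneg y, norm_nonneg v]

theorem norm_add_mul_le_norm_add_div_smul {y w : E} (hw : w ≠ 0) {c ε : ℝ} (hc₀ : 0 ≤ c)
    (hc₁ : c ≤ 1) (hε : 0 ≤ ε) (hinner : c * (‖y‖ * ‖w‖) ≤ ⟪y, w⟫) :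
    ‖y‖ + c * ε ≤ ‖y + (ε / ‖w‖) • w‖ := by
  have hw₀ : 0 < ‖w‖ := norm_pos_iff.mpr hw
  set t := ε / ‖w‖
  have ht : t * ‖w‖ = ε := div_mul_cancel₀ ε hw₀.ne'
  have hexpand : ‖y + t • w‖ ^ 2 = ‖y‖ ^ 2 + 2 * (t * ⟪y, w⟫) + ε ^ 2 := by
    rw [norm_add_sq_real, real_inner_smul_right, norm_smul, Real.norm_of_nonneg
      (div_nonneg hε hw₀.le), ht]
  have hcross : c * ε * ‖y‖ ≤ t * ⟪y, w⟫ := by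
    calc c * ε * ‖y‖ = t * (c * (‖y‖ * ‖w‖)) := by rw [← ht]; ring
      _ ≤ t * ⟪y, w⟫ := mul_le_mul_of_nonneg_left hinner (div_nonneg hε hw₀.le)
  refine abs_le_of_sq_le_sq' ?_ (norm_nonneg _) |>.2
  rw [hexpand]
  nlinarith [norm_nonneg y, mul_le_mul_of_nonneg_left hc₁ (sq_nonneg ε), sq_nonneg c]

end

theorem radial_push_increases_norm_general
    (d : ℕ) (r ε : ℝ) (hr : 0 < r) (hε : 0 ≤ ε)
    (x u τ C : EuclideanSpace ℝ (Fin d))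
    (h1 : 9 / 10 * r ≤ ‖x + u‖)
    (h3 : ‖τ - C‖ ≤ r / 10) :
    x + u + τ - C ≠ 0 ∧
      ‖x + u‖ + ε / 3 ≤ ‖x + u + (ε / ‖x + u + τ - C‖) • (x + u + τ - C)‖ := by
  have hsmall : ‖τ - C‖ ≤ ‖x + u‖ / 2 := by linarith
  have hne : x + u + (τ - C) ≠ 0 := add_ne_zero_of_norm_lt (by linarith)
  rw [add_sub_assoc]
  refine ⟨hne, ?_⟩
  simpa only [one_div_mul_eq_div] using
    norm_add_mul_le_norm_add_div_smul hne (by norm_num) (by norm_num) hε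
      (one_third_mul_norm_mul_norm_add_le_inner_add hsmall)

/-- Elementary geometric claim: if `(9/10)r ≤ |x+u| ≤ (11/10)r` and
`|τ − C| ≤ r/10`, then `x+u+τ−C ≠ 0` and pushing `x+u` by `ε` in the direction of
`x+u+τ−C` increases the norm by at least `ε/3`. -/
theorem radial_push_increases_norm
    (d : ℕ) (hd : 1 ≤ d) (r ε : ℝ) (hr : 0 < r) (hε : 0 ≤ ε)
    (x u τ C : EuclideanSpace ℝ (Fin d))
    (h1 : 9 / 10 * r ≤ ‖x + u‖) (h2 : ‖x + u‖ ≤ 11 / 10 * r)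
    (h3 : ‖τ - C‖ ≤ r / 10) :
    x + u + τ - C ≠ 0 ∧
      ‖x + u‖ + ε / 3 ≤ ‖x + u + (ε / ‖x + u + τ - C‖) • (x + u + τ - C)‖ :=
  radial_push_increases_norm_general d r ε hr hε x u τ C h1 h3
end
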